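/- arXiv:2402.15787 — 9 statements merged into one kernel-verified Lean document; each statement's English description precedes it below -/
import Mathlib

section
/- Let U ⊆ U' ⊆ ℤ² be two sets of lattice points that are upward closed, i.e., (x, y) ∈ U implies (x, y+1) ∈ U, and likewise for U'. Then peel(U) ⊆ peel(U'), where one grid peeling step is peel(U) = U \ E(U) with E(U) the set of extreme points of the convex hull of U. -/
/-- One grid peeling step: remove the extreme points of the convex hull. -/
noncomputable def peel (U : Set (ℝ × ℝ)) : Set (ℝ × ℝ) :=
  U \ Set.extremePoints ℝ (convexHull ℝ U)

/-- Grid peeling preserves inclusion between upward-closed sets of lattice points. -/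
theorem peel_mono (U U' : Set (ℝ × ℝ))
    (hUU' : U ⊆ U')
    (hlatU : U ⊆ {p : ℝ × ℝ | ∃ i j : ℤ, p = ((i : ℝ), (j : ℝ))})
    (hlatU' : U' ⊆ {p : ℝ × ℝ | ∃ i j : ℤ, p = ((i : ℝ), (j : ℝ))})
    (hupU : ∀ p : ℝ × ℝ, p ∈ U → (p.1, p.2 + 1) ∈ U)
    (hupU' : ∀ p : ℝ × ℝ, p ∈ U' → (p.1, p.2 + 1) ∈ U') :
    peel U ⊆ peel U' := by
  rintro p ⟨hpU, hpne⟩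
  refine ⟨hUU' hpU, fun hext => hpne ?_⟩
  exact ⟨subset_convexHull ℝ U hpU, fun x hx y hy hseg =>
    hext.2 (convexHull_mono hUU' hx) (convexHull_mono hUU' hy) hseg⟩
end

section
/- For every positive integer t, 2 · Σ ⌊t/x⌋·y = H_t + t, where the sum is taken over all pairs of integers (x, y) with 1 ≤ y ≤ x ≤ t and gcd(x, y) = 1. (Geometrically: the segment of the grid parabola P_t from the midpoint of its horizontal edge to the midpoint of its edge of slope 1 has slope exactly 1/2.) -/
/-- The horizontal period `H_t = Σ ⌊t/x⌋·x` over pairs `1 ≤ y ≤ x ≤ t` with `gcd(x,y) = 1`. -/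
def Hper (t : ℕ) : ℕ :=
  ∑ p ∈ (Finset.Icc 1 t ×ˢ Finset.Icc 1 t).filter
      (fun p => p.2 ≤ p.1 ∧ Nat.gcd p.1 p.2 = 1),
    (t / p.1) * p.1

/-- For every positive integer t, 2·Σ ⌊t/x⌋·y = H_t + t, the sum over pairs
1 ≤ y ≤ x ≤ t with gcd(x,y) = 1. -/
theorem sum_floor_mul_y (t : ℕ) (ht : 0 < t) :
    2 * ∑ p ∈ (Finset.Icc 1 t ×ˢ Finset.Icc 1 t).filter
        (fun p => p.2 ≤ p.1 ∧ Nat.gcd p.1 p.2 = 1),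
      (t / p.1) * p.2 = Hper t + t := by
  classical
  set S := (Finset.Icc 1 t ×ˢ Finset.Icc 1 t).filter
      (fun p => p.2 ≤ p.1 ∧ Nat.gcd p.1 p.2 = 1) with hS
  have hmem : ∀ p : ℕ × ℕ, p ∈ S ↔
      (1 ≤ p.1 ∧ p.1 ≤ t ∧ 1 ≤ p.2 ∧ p.2 ≤ t ∧ p.2 ≤ p.1 ∧ Nat.gcd p.1 p.2 = 1) := by
    intro p
    simp [hS, Finset.mem_filter, Finset.mem_product, Finset.mem_Icc, and_assoc]
  set σ : ℕ × ℕ → ℕ × ℕ := fun p => (p.1, if p.1 = 1 then 1 else p.1 - p.2) with hσdef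
  have hylt : ∀ p : ℕ × ℕ, p ∈ S → p.1 ≠ 1 → p.2 < p.1 := by
    intro p hp h1
    rcases (hmem p).1 hp with ⟨hx1, hxt, hy1, hyt, hyx, hg⟩
    rcases lt_or_eq_of_le hyx with h | h
    · exact h
    · exfalso; rw [h, Nat.gcd_self] at hg; exact h1 (h ▸ hg)
  have hmap : ∀ p ∈ S, σ p ∈ S := by
    intro p hp
    rcases (hmem p).1 hp with ⟨hx1, hxt, hy1, hyt, hyx, hg⟩
    rw [hmem]
    by_cases h1 : p.1 = 1
    · simp only [hσdef, h1, if_pos]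
      refine ⟨le_refl 1, by omega, le_refl 1, by omega, le_refl 1, by simp⟩
    · have hlt := hylt p hp h1
      refine ⟨hx1, hxt, ?_, ?_, ?_, ?_⟩ <;> simp only [hσdef, if_neg h1]
      · omega
      · omega
      · omega
      · rw [Nat.gcd_self_sub_right hyx]; exact hg
  have hinv : ∀ p ∈ S, σ (σ p) = p := by
    intro p hp
    rcases (hmem p).1 hp with ⟨hx1, hxt, hy1, hyt, hyx, hg⟩
    by_cases h1 : p.1 = 1
    · have : p.2 = 1 := by omega
      simp [hσdef, h1, Prod.ext_iff, this]
    · simp [hσdef, h1, Prod.ext_iff]; omega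
  have hsum : ∑ p ∈ S, (t / p.1) * p.2 = ∑ p ∈ S, (t / p.1) * (σ p).2 := by
    refine Finset.sum_nbij' σ σ hmap hmap hinv hinv ?_
    intro p hp
    show t / p.1 * p.2 = t / (σ p).1 * (σ (σ p)).2
    rw [hinv p hp]
  have key : ∀ p ∈ S, (t / p.1) * p.2 + (t / p.1) * (σ p).2
      = (t / p.1) * p.1 + (if p.1 = 1 then t else 0) := by
    intro p hp
    rcases (hmem p).1 hp with ⟨hx1, hxt, hy1, hyt, hyx, hg⟩
    by_cases h1 : p.1 = 1
    · have hy : p.2 = 1 := by omega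
      simp [hσdef, h1, hy]
    · have hlt := hylt p hp h1
      simp only [hσdef, h1, if_neg, if_false]
      rw [← Nat.mul_add, Nat.add_sub_cancel' hyx, Nat.add_zero]
  have hone : ∑ p ∈ S, (if p.1 = 1 then t else 0) = t := by
    rw [Finset.sum_eq_single_of_mem ((1 : ℕ), (1 : ℕ))]
    · simp
    · rw [hmem]; refine ⟨le_refl 1, by omega, le_refl 1, by omega, le_refl 1, by simp⟩
    · intro b hb hne
      rw [if_neg]
      intro hb1
      rcases (hmem b).1 hb with ⟨hx1, hxt, hy1, hyt, hyx, hg⟩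
      exact hne (Prod.ext hb1 (by omega))
  have h2 : 2 * ∑ p ∈ S, (t / p.1) * p.2
      = ∑ p ∈ S, ((t / p.1) * p.2 + (t / p.1) * (σ p).2) := by
    rw [Finset.sum_add_distrib, ← hsum]; ring
  rw [h2, Finset.sum_congr rfl key, Finset.sum_add_distrib, hone]
  rfl
end

section
/- For every positive integer t, H_t ≡ t (mod 2); that is, the horizontal period H_t is even if and only if t is even. -/
lemma card_eq_totient (t x : ℕ) (hx : 2 ≤ x) (hxt : x ≤ t) :
    ((Finset.Icc 1 t).filter (fun y => y ≤ x ∧ Nat.gcd x y = 1)).card = Nat.totient x := by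
  have : ((Finset.Icc 1 t).filter (fun y => y ≤ x ∧ Nat.gcd x y = 1)) =
      (Finset.range x).filter x.Coprime := by
    ext y
    simp only [Finset.mem_filter, Finset.mem_Icc, Finset.mem_range, Nat.Coprime]
    constructor
    · rintro ⟨⟨h1, h2⟩, h3, h4⟩
      refine ⟨?_, h4⟩
      rcases lt_or_eq_of_le h3 with h | h
      · exact h
      · subst h; rw [Nat.gcd_self] at h4; omega
    · rintro ⟨h1, h2⟩
      have hy : 1 ≤ y := by
        rcases Nat.eq_zero_or_pos y with h | h
        · subst h; rw [Nat.gcd_zero_right] at h2; omega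
        · exact h
      exact ⟨⟨hy, le_trans (le_of_lt h1) hxt⟩, le_of_lt h1, h2⟩
  rw [this]
  rfl

/-- H_t ≡ t (mod 2): the horizontal period H_t is even iff t is even. -/
theorem Hper_mod_two (t : ℕ) (ht : 0 < t) : Hper t % 2 = t % 2 := by
  rw [← ZMod.natCast_eq_natCast_iff']
  have : (Hper t : ZMod 2) =
      ∑ p ∈ (Finset.Icc 1 t ×ˢ Finset.Icc 1 t).filter
        (fun p => p.2 ≤ p.1 ∧ Nat.gcd p.1 p.2 = 1), ((t / p.1 : ℕ) * (p.1 : ℕ) : ZMod 2) := by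
    rw [Hper]; push_cast; ring_nf
  rw [this, Finset.sum_filter, Finset.sum_product]
  have step : ∀ x ∈ Finset.Icc 1 t,
      (∑ y ∈ Finset.Icc 1 t, if y ≤ x ∧ Nat.gcd x y = 1 then ((t / x : ℕ) * (x : ℕ) : ZMod 2) else 0)
      = ((Finset.Icc 1 t).filter (fun y => y ≤ x ∧ Nat.gcd x y = 1)).card •
          ((t / x : ℕ) * (x : ℕ) : ZMod 2) := by
    intro x hx
    rw [← Finset.sum_filter, Finset.sum_const]
  rw [Finset.sum_congr rfl step]
  rw [Finset.sum_eq_single 1]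
  · have hcard : ((Finset.Icc 1 t).filter (fun y => y ≤ 1 ∧ Nat.gcd 1 y = 1)) = {1} := by
      ext y
      simp only [Finset.mem_filter, Finset.mem_Icc, Finset.mem_singleton, Nat.gcd_one_left]
      constructor
      · rintro ⟨⟨h1, _⟩, h2, _⟩; omega
      · rintro rfl; exact ⟨⟨le_refl 1, ht⟩, le_refl 1, trivial⟩
    rw [hcard]
    simp
  · intro x hx hx1
    simp only [Finset.mem_Icc] at hx
    rcases Nat.lt_or_ge x 3 with h | h
    · have hx2 : x = 2 := by omega
      subst hx2
      have : ((2 : ℕ) : ZMod 2) = 0 := by decide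
      rw [Nat.cast_ofNat] at this ⊢
      rw [this, mul_zero, smul_zero]
    · have heven : Even (((Finset.Icc 1 t).filter
          (fun y => y ≤ x ∧ Nat.gcd x y = 1)).card) := by
        rw [card_eq_totient t x (by omega) hx.2]
        exact Nat.totient_even (by omega)
      obtain ⟨k, hk⟩ := heven
      rw [hk]
      rw [nsmul_eq_mul]
      push_cast
      ring_nf
      exact mul_eq_zero_of_right _ (by decide)
  · intro h
    simp only [Finset.mem_Icc] at h
    omega
end

section
/- There exists a constant C > 0 such that for every integer t ≥ 2 and every real x, |g_t(x) − (x − t/2)²/(2H_t)| ≤ C·t²·log t; that is, the vertical distance between the grid parabola P_t and the reference parabola y = (x − t/2)²/(2H_t) is O(t² log t). -/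
/-- Horizontal length of the edge of slope a/b (in lowest terms, 1 ≤ b ≤ t)
of the grid parabola P_t: `b·⌊t/b⌋`. -/
def edgeLen (t b : ℕ) : ℕ := b * (t / b)

/-- The x-coordinate of the left endpoint of the edge of slope a/b of the grid
parabola P_t (normalized so that the edge of slope 0 is [0,t]): it is t plus the
total horizontal length of all edges of slopes strictly between 0 and a/b. -/
noncomputable def leftEnd (t a b : ℕ) : ℝ :=
  (t : ℝ) + ∑ q ∈ (Finset.Icc 1 t ×ˢ Finset.Icc 1 (a * t)).filter
      (fun q => Nat.gcd q.2 q.1 = 1 ∧ q.2 * b < a * q.1),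
    (edgeLen t q.1 : ℝ)

/-- The right half of the grid parabola: for x ≥ t, sum over all primitive slopes
a/b (a ≥ 1, 1 ≤ b ≤ t) of the vertical rise accumulated by the edge of slope a/b
up to abscissa x. -/
noncomputable def gR (t : ℕ) (x : ℝ) : ℝ :=
  ∑' p : ℕ × ℕ,
    if 1 ≤ p.1 ∧ 1 ≤ p.2 ∧ p.2 ≤ t ∧ Nat.gcd p.1 p.2 = 1 then
      ((p.1 : ℝ) / (p.2 : ℝ)) *
        min (max (x - leftEnd t p.1 p.2) 0) ((edgeLen t p.2 : ℕ) : ℝ)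
    else 0

/-- The convex piecewise-linear function `g_t` whose graph is the grid parabola
P_t : for each rational slope a/b in lowest terms with 1 ≤ b ≤ t there is exactly
one edge of slope a/b, of horizontal length b·⌊t/b⌋, the edges occurring in order
of increasing slope; normalized so that g_t = 0 exactly on [0,t].  The left half
is obtained from the right half by the symmetry x ↦ t - x. -/
noncomputable def gridParabola (t : ℕ) (x : ℝ) : ℝ :=
  if x ≤ (t : ℝ) / 2 then gR t ((t : ℝ) - x) else gR t x

/-!
For `x ≥ t` the right half `gR t` is the Legendre transform of the convex function
`F s = s t + ∑ (s - a/b)₊ · b⌊t/b⌋`, summed over the edges `a/b` of positive slope: every edge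
`p` contributes `(s - slope p) · (length of p left of x) ≤ (s - slope p)₊ · (length of p)`,
so `gR t x ≥ s x - F s`, with equality when `s` is the slope of the edge containing `x`.
Grouping the edges by denominator and Möbius inversion give
`F s = s t / 2 + s² H_t / 2 + O(∑_{b ≤ t} ⌊t/b⌋ σ(b)) = s t / 2 + s² H_t / 2 + O(t² log t)`,
and the Legendre transform of `s t / 2 + s² H_t / 2` is the reference parabola
`(x - t/2)² / (2 H_t)`. On `[t/2, t]` both sides are `O(t)`, and the left half follows by the
symmetry `x ↦ t - x`.
-/

open Finset

namespace GridParabola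

/-- `p = (a, b)` stands for the edge of slope `a / b` on the right half of `P_t`. -/
def IsEdge (t : ℕ) (p : ℕ × ℕ) : Prop :=
  1 ≤ p.1 ∧ 1 ≤ p.2 ∧ p.2 ≤ t ∧ Nat.gcd p.1 p.2 = 1

instance (t : ℕ) : DecidablePred (IsEdge t) := fun _ => inferInstanceAs (Decidable (_ ∧ _))

noncomputable def slope (p : ℕ × ℕ) : ℝ := p.1 / p.2

def edges (t A : ℕ) : Finset (ℕ × ℕ) := {p ∈ Icc 1 A ×ˢ Icc 1 t | IsEdge t p}

def edgeSpan (t : ℕ) (e : ℕ × ℕ) : Set ℝ :=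
  Set.Icc (leftEnd t e.1 e.2) (leftEnd t e.1 e.2 + edgeLen t e.2)

variable {t A : ℕ} {p q e : ℕ × ℕ}

lemma mem_edges : p ∈ edges t A ↔ p.1 ≤ A ∧ IsEdge t p := by
  rw [edges, mem_filter, mem_product, mem_Icc, mem_Icc]
  unfold IsEdge
  grind

lemma slope_lt_slope_iff (hp : 1 ≤ p.2) (hq : 1 ≤ q.2) :
    slope p < slope q ↔ p.1 * q.2 < q.1 * p.2 := by
  rw [slope, slope, div_lt_div_iff₀ (by exact_mod_cast hp) (by exact_mod_cast hq)]
  norm_cast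

lemma slope_nonneg (p : ℕ × ℕ) : 0 ≤ slope p := by unfold slope; positivity

lemma slope_mul_le_fst_mul (hp : 1 ≤ p.2) (t : ℕ) : slope p * t ≤ (p.1 * t : ℕ) := by
  push_cast
  gcongr
  exact div_le_self (Nat.cast_nonneg _) (by exact_mod_cast hp)

lemma IsEdge.snd_pos (hp : IsEdge t p) : (0 : ℝ) < p.2 := by exact_mod_cast hp.2.1

lemma IsEdge.fst_le_slope_mul (hp : IsEdge t p) : (p.1 : ℝ) ≤ slope p * t := by
  calc (p.1 : ℝ) = slope p * p.2 := by rw [slope, div_mul_cancel₀ _ hp.snd_pos.ne']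
    _ ≤ slope p * t := by gcongr; exacts [slope_nonneg p, hp.2.2.1]

lemma IsEdge.mem_edges_of_slope_le (hp : IsEdge t p) {s : ℝ} (hs : slope p ≤ s)
    (hA : s * t ≤ A) : p ∈ edges t A := by
  refine mem_edges.2 ⟨?_, hp⟩
  have : slope p * t ≤ s * t := by gcongr
  exact_mod_cast (hp.fst_le_slope_mul.trans this).trans hA

lemma IsEdge.eq_of_slope_eq (hp : IsEdge t p) (hq : IsEdge t q) (h : slope p = slope q) :
    p = q := by
  have hcross : p.1 * q.2 = q.1 * p.2 := by
    rw [slope, slope, div_eq_div_iff hp.snd_pos.ne' hq.snd_pos.ne'] at h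
    exact_mod_cast h
  have h1 : p.1 = q.1 := Nat.dvd_antisymm
    (Nat.Coprime.dvd_of_dvd_mul_right hp.2.2.2 ⟨q.2, hcross.symm⟩)
    (Nat.Coprime.dvd_of_dvd_mul_right hq.2.2.2 ⟨p.2, hcross⟩)
  have h2 : q.2 = p.2 := Nat.eq_of_mul_eq_mul_left hp.1 (h1 ▸ hcross)
  exact Prod.ext h1 h2.symm

lemma leftEnd_eq_sum (he : 1 ≤ e.2) (hA : slope e * t ≤ A) :
    leftEnd t e.1 e.2 = t + ∑ r ∈ edges t A with slope r < slope e, (edgeLen t r.2 : ℝ) := by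
  rw [leftEnd]
  congr 1
  refine sum_nbij' Prod.swap Prod.swap ?_ ?_ (fun _ _ => rfl) (fun _ _ => rfl) (fun _ _ => rfl)
  · rintro ⟨b, a⟩ hq
    simp only [mem_filter, mem_product, mem_Icc, Prod.swap] at hq ⊢
    obtain ⟨⟨⟨hb1, hbt⟩, ha1, -⟩, hab, hlt⟩ := hq
    have hslope : slope (a, b) < slope e := (slope_lt_slope_iff hb1 he).2 hlt
    exact ⟨IsEdge.mem_edges_of_slope_le ⟨ha1, hb1, hbt, hab⟩ hslope.le hA, hslope⟩
  · rintro ⟨a, b⟩ hp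
    simp only [mem_filter, mem_edges] at hp
    obtain ⟨⟨-, ha1, hb1, hbt, hab⟩, hlt⟩ := hp
    have hlt' := (slope_lt_slope_iff hb1 he).1 hlt
    simp only [Prod.swap, mem_filter, mem_product, mem_Icc]
    refine ⟨⟨⟨hb1, hbt⟩, ha1, ?_⟩, hab, hlt'⟩
    calc a ≤ a * e.2 := Nat.le_mul_of_pos_right a he
      _ ≤ e.1 * b := hlt'.le
      _ ≤ e.1 * t := Nat.mul_le_mul_left _ hbt

lemma le_leftEnd (t a b : ℕ) : (t : ℝ) ≤ leftEnd t a b :=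
  le_add_of_nonneg_right (sum_nonneg fun _ _ => Nat.cast_nonneg _)

lemma leftEnd_add_edgeLen_le (hp : IsEdge t p) (hq : IsEdge t q) (h : slope p < slope q) :
    leftEnd t p.1 p.2 + edgeLen t p.2 ≤ leftEnd t q.1 q.2 := by
  have hA := slope_mul_le_fst_mul hq.2.1 t
  have hpA : slope p * t ≤ (q.1 * t : ℕ) := hA.trans' (by gcongr)
  rw [leftEnd_eq_sum hp.2.1 hpA, leftEnd_eq_sum hq.2.1 hA, add_assoc, add_le_add_iff_left,
    add_comm, ← sum_insert (f := fun r => (edgeLen t r.2 : ℝ))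
      (show p ∉ {r ∈ edges t (q.1 * t) | slope r < slope p} by simp)]
  refine sum_le_sum_of_subset_of_nonneg (insert_subset ?_ ?_) fun _ _ _ => Nat.cast_nonneg _
  · exact mem_filter.2 ⟨hp.mem_edges_of_slope_le h.le hA, h⟩
  · intro r hr
    rw [mem_filter] at hr ⊢
    exact ⟨hr.1, hr.2.trans h⟩

lemma IsEdge.fst_le_leftEnd (hp : IsEdge t p) : (p.1 : ℝ) ≤ leftEnd t p.1 p.2 := by
  have hA := slope_mul_le_fst_mul hp.2.1 t
  have hm := Nat.lt_mul_div_succ (p.1 - 1) hp.2.1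
  have hm' := Nat.div_mul_le_self (p.1 - 1) p.2
  generalize (p.1 - 1) / p.2 = m at hm hm'
  -- the edges `(k, 1)` with `k < p.1 / p.2` already have total length `m * t`
  have hsub : Icc 1 m ×ˢ {1} ⊆ {r ∈ edges t (p.1 * t) | slope r < slope p} := by
    rintro ⟨k, l⟩ hr
    obtain ⟨⟨hk1, hkm⟩, rfl⟩ : (1 ≤ k ∧ k ≤ m) ∧ 1 = l := by simpa using hr
    have hkp : k * p.2 < p.1 := by
      have := Nat.mul_le_mul_right p.2 hkm
      have := hp.1
      omega
    have hslope : slope (k, 1) < slope p := (slope_lt_slope_iff le_rfl hp.2.1).2 (by simpa)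
    have hedge : IsEdge t (k, 1) := ⟨hk1, le_rfl, hp.2.1.trans hp.2.2.1, Nat.gcd_one_right k⟩
    exact mem_filter.2 ⟨hedge.mem_edges_of_slope_le hslope.le hA, hslope⟩
  have hsum : (m * t : ℝ) ≤ ∑ r ∈ edges t (p.1 * t) with slope r < slope p, (edgeLen t r.2 : ℝ) :=
    calc (m * t : ℝ) = ∑ r ∈ Icc 1 m ×ˢ {1}, (edgeLen t r.2 : ℝ) := by simp [edgeLen]
      _ ≤ _ := sum_le_sum_of_subset_of_nonneg hsub fun _ _ _ => Nat.cast_nonneg _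
  have hmt : p.1 ≤ t * (m + 1) := calc
    p.1 ≤ p.2 * (m + 1) := by omega
    _ ≤ t * (m + 1) := Nat.mul_le_mul_right _ hp.2.2.1
  rw [leftEnd_eq_sum hp.2.1 hA]
  calc (p.1 : ℝ) ≤ t * (m + 1) := by exact_mod_cast hmt
    _ ≤ _ := by linarith

lemma leftEnd_one_self (ht : 1 ≤ t) : leftEnd t 1 t = t := by
  rw [leftEnd_eq_sum (e := (1, t)) ht (slope_mul_le_fst_mul ht t), add_eq_left]
  refine sum_eq_zero fun r hr => ?_
  obtain ⟨hr, hlt⟩ := mem_filter.1 hr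
  have hr := (mem_edges.1 hr).2
  rw [slope_lt_slope_iff hr.2.1 ht] at hlt
  nlinarith [hr.1, hr.2.2.1]

lemma IsEdge.exists_next (hp : IsEdge t p) : ∃ q, IsEdge t q ∧ slope p < slope q ∧
    leftEnd t q.1 q.2 = leftEnd t p.1 p.2 + edgeLen t p.2 := by
  have hstep : IsEdge t (p.1 + 1, 1) :=
    ⟨by omega, le_rfl, hp.2.1.trans hp.2.2.1, Nat.gcd_one_right _⟩
  have hp_lt : slope p < slope (p.1 + 1, 1) := by
    rw [slope_lt_slope_iff hp.2.1 le_rfl]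
    nlinarith [hp.2.1]
  have hstep_mem : (p.1 + 1, 1) ∈ {r ∈ edges t ((p.1 + 1) * t) | slope p < slope r} :=
    mem_filter.2 ⟨hstep.mem_edges_of_slope_le le_rfl (slope_mul_le_fst_mul le_rfl t), hp_lt⟩
  obtain ⟨q, hqS, hmin⟩ := exists_min_image _ slope ⟨_, hstep_mem⟩
  obtain ⟨hq, hpq⟩ := mem_filter.1 hqS
  replace hq := (mem_edges.1 hq).2
  have hgap : ∀ r, IsEdge t r → slope r < slope q → slope r ≤ slope p := by
    intro r hr hrq
    by_contra! hpr
    have hA : slope q * t ≤ ((p.1 + 1) * t : ℕ) :=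
      (slope_mul_le_fst_mul (p := (p.1 + 1, 1)) le_rfl t).trans'
        (by gcongr; exact hmin _ hstep_mem)
    exact (hmin r (mem_filter.2 ⟨hr.mem_edges_of_slope_le hrq.le hA, hpr⟩)).not_gt hrq
  refine ⟨q, hq, hpq, ?_⟩
  have hA := slope_mul_le_fst_mul hq.2.1 t
  have hbelow : {r ∈ edges t (q.1 * t) | slope r < slope q} =
      insert p {r ∈ edges t (q.1 * t) | slope r < slope p} := by
    ext r
    simp only [mem_filter, mem_insert]
    constructor
    · rintro ⟨hr, hrq⟩
      rcases (hgap r (mem_edges.1 hr).2 hrq).lt_or_eq with hrp | hrp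
      · exact Or.inr ⟨hr, hrp⟩
      · exact Or.inl ((mem_edges.1 hr).2.eq_of_slope_eq hp hrp)
    · rintro (rfl | ⟨hr, hrp⟩)
      · exact ⟨hp.mem_edges_of_slope_le hpq.le hA, hpq⟩
      · exact ⟨hr, hrp.trans hpq⟩
  rw [leftEnd_eq_sum hq.2.1 hA, hbelow, sum_insert (by simp),
    leftEnd_eq_sum hp.2.1 (hA.trans' (by gcongr))]
  ring

lemma exists_edge_mem_edgeSpan (ht : 1 ≤ t) {x : ℝ} (hx : t ≤ x) :
    ∃ e, IsEdge t e ∧ x ∈ edgeSpan t e := by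
  have hmem_D : ∀ p, IsEdge t p → leftEnd t p.1 p.2 ≤ x →
      p ∈ {r ∈ edges t ⌈x⌉₊ | leftEnd t r.1 r.2 ≤ x} := fun p hp h =>
    mem_filter.2 ⟨mem_edges.2 ⟨Nat.cast_le.1 <| (hp.fst_le_leftEnd.trans h).trans
      (Nat.le_ceil x), hp⟩, h⟩
  have hfirst : IsEdge t (1, t) := ⟨le_rfl, ht, le_rfl, Nat.gcd_one_left t⟩
  obtain ⟨e, heD, hmax⟩ := exists_max_image _ slope
    ⟨_, hmem_D _ hfirst (by rwa [leftEnd_one_self ht])⟩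
  obtain ⟨he, hex⟩ := mem_filter.1 heD
  refine ⟨e, (mem_edges.1 he).2, hex, ?_⟩
  by_contra! h
  obtain ⟨q, hq, heq, hqL⟩ := (mem_edges.1 he).2.exists_next
  exact (hmax q (hmem_D q hq (hqL ▸ h.le))).not_gt heq

/-- The horizontal length of the part of edge `p` lying left of `x`. -/
noncomputable def partialLen (t : ℕ) (x : ℝ) (p : ℕ × ℕ) : ℝ :=
  min (max (x - leftEnd t p.1 p.2) 0) (edgeLen t p.2)

lemma gR_eq_tsum (t : ℕ) (x : ℝ) :
    gR t x = ∑' p, if IsEdge t p then slope p * partialLen t x p else 0 := rfl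

/-- The Legendre transform `s ↦ sup_x (s * x - gR t x)` of `gR t`, in closed form. -/
noncomputable def gRConj (t : ℕ) (s : ℝ) : ℝ :=
  s * t + ∑' p, if IsEdge t p then max (s - slope p) 0 * edgeLen t p.2 else 0

variable {x : ℝ}

lemma partialLen_nonneg : 0 ≤ partialLen t x p :=
  le_min (le_max_right _ _) (Nat.cast_nonneg _)

lemma partialLen_le_edgeLen : partialLen t x p ≤ edgeLen t p.2 := min_le_right _ _

lemma partialLen_of_le_leftEnd (h : x ≤ leftEnd t p.1 p.2) : partialLen t x p = 0 := by
  rw [partialLen, max_eq_right (by linarith), min_eq_left (Nat.cast_nonneg _)]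

lemma partialLen_of_leftEnd_add_le (h : leftEnd t p.1 p.2 + edgeLen t p.2 ≤ x) :
    partialLen t x p = edgeLen t p.2 := by
  rw [partialLen, max_eq_left (by linarith [(Nat.cast_nonneg _ : (0 : ℝ) ≤ edgeLen t p.2)]),
    min_eq_right (by linarith)]

lemma partialLen_of_mem_edgeSpan (hx : x ∈ edgeSpan t e) :
    partialLen t x e = x - leftEnd t e.1 e.2 := by
  rw [partialLen, max_eq_left (sub_nonneg.2 hx.1), min_eq_left (by linarith [hx.2])]

lemma tsum_ite_isEdge_eq_sum {f : ℕ × ℕ → ℝ} (hf : ∀ p, IsEdge t p → A < p.1 → f p = 0) :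
    (∑' p, if IsEdge t p then f p else 0) = ∑ p ∈ edges t A, f p := by
  rw [tsum_eq_sum (s := edges t A) fun p hp => ?_]
  · exact sum_congr rfl fun p hp => if_pos (mem_edges.1 hp).2
  · split_ifs with h
    · exact hf p h (by by_contra! hle; exact hp (mem_edges.2 ⟨hle, h⟩))
    · rfl

lemma gR_eq_sum (hx : x ≤ A) : gR t x = ∑ p ∈ edges t A, slope p * partialLen t x p := by
  refine (gR_eq_tsum t x).trans (tsum_ite_isEdge_eq_sum fun p hp hAp => ?_)
  rw [partialLen_of_le_leftEnd, mul_zero]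
  calc x ≤ A := hx
    _ ≤ p.1 := by exact_mod_cast hAp.le
    _ ≤ _ := hp.fst_le_leftEnd

lemma gR_of_le (hx : x ≤ t) : gR t x = 0 := by
  refine (gR_eq_tsum t x).trans ((tsum_congr fun p => ?_).trans tsum_zero)
  rw [partialLen_of_le_leftEnd (hx.trans (le_leftEnd _ _ _)), mul_zero, ite_self]

lemma gRConj_eq_sum {s : ℝ} (hA : s * t ≤ A) :
    gRConj t s = s * t + ∑ p ∈ edges t A, max (s - slope p) 0 * edgeLen t p.2 := by
  rw [gRConj, tsum_ite_isEdge_eq_sum fun p hp hAp => ?_]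
  rw [max_eq_right, zero_mul]
  have : s * t < slope p * t := calc
    s * t ≤ A := hA
    _ < p.1 := by exact_mod_cast hAp
    _ ≤ slope p * t := hp.fst_le_slope_mul
  linarith [lt_of_mul_lt_mul_right this (Nat.cast_nonneg t)]

lemma partialLen_of_slope_lt (he : IsEdge t e) (hx : x ∈ edgeSpan t e) (hp : IsEdge t p)
    (h : slope p < slope e) : partialLen t x p = edgeLen t p.2 :=
  partialLen_of_leftEnd_add_le ((leftEnd_add_edgeLen_le hp he h).trans hx.1)

lemma partialLen_of_slope_gt (he : IsEdge t e) (hx : x ∈ edgeSpan t e) (hp : IsEdge t p)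
    (h : slope e < slope p) : partialLen t x p = 0 :=
  partialLen_of_le_leftEnd (hx.2.trans (leftEnd_add_edgeLen_le he hp h))

lemma sum_partialLen (he : IsEdge t e) (hx : x ∈ edgeSpan t e) (hA : slope e * t ≤ A) :
    ∑ p ∈ edges t A, partialLen t x p = x - t := by
  have he_mem : e ∈ {p ∈ edges t A | ¬slope p < slope e} :=
    mem_filter.2 ⟨he.mem_edges_of_slope_le le_rfl hA, lt_irrefl _⟩
  rw [← sum_filter_add_sum_filter_not _ (fun p => slope p < slope e),
    sum_congr rfl fun p hp => partialLen_of_slope_lt he hx (mem_edges.1 (mem_filter.1 hp).1).2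
      (mem_filter.1 hp).2,
    sum_eq_single_of_mem e he_mem, partialLen_of_mem_edgeSpan hx, leftEnd_eq_sum he.2.1 hA]
  · ring
  · intro p hp hpe
    obtain ⟨hp, hpe'⟩ := mem_filter.1 hp
    have hp := (mem_edges.1 hp).2
    exact partialLen_of_slope_gt he hx hp
      ((not_lt.1 hpe').lt_of_ne fun h => hpe (hp.eq_of_slope_eq he h.symm))

lemma sub_slope_mul_partialLen_le (s : ℝ) (p : ℕ × ℕ) :
    (s - slope p) * partialLen t x p ≤ max (s - slope p) 0 * edgeLen t p.2 :=
  calc (s - slope p) * partialLen t x p ≤ max (s - slope p) 0 * partialLen t x p := by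
        gcongr; exacts [partialLen_nonneg, le_max_left (s - slope p) 0]
    _ ≤ max (s - slope p) 0 * edgeLen t p.2 := by gcongr; exact partialLen_le_edgeLen

lemma slope_sub_slope_mul_partialLen (he : IsEdge t e) (hx : x ∈ edgeSpan t e)
    (hp : IsEdge t p) :
    (slope e - slope p) * partialLen t x p = max (slope e - slope p) 0 * edgeLen t p.2 := by
  rcases lt_trichotomy (slope p) (slope e) with h | h | h
  · rw [partialLen_of_slope_lt he hx hp h, max_eq_left (by linarith)]
  · simp [h]
  · rw [partialLen_of_slope_gt he hx hp h, max_eq_right (by linarith)]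
    simp

lemma sum_sub_slope_mul_partialLen (he : IsEdge t e) (hx : x ∈ edgeSpan t e) (hxA : x ≤ A)
    (hA : slope e * t ≤ A) (s : ℝ) :
    ∑ p ∈ edges t A, (s - slope p) * partialLen t x p = s * (x - t) - gR t x := by
  simp_rw [sub_mul, sum_sub_distrib, ← mul_sum, sum_partialLen he hx hA, gR_eq_sum hxA]

lemma mul_sub_gRConj_le_gR (ht : 1 ≤ t) (hx : t ≤ x) (s : ℝ) : s * x - gRConj t s ≤ gR t x := by
  obtain ⟨e, he, hxe⟩ := exists_edge_mem_edgeSpan ht hx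
  obtain ⟨A, hA⟩ := exists_nat_ge (max x (max (s * t) (slope e * t)))
  have hsum := sum_sub_slope_mul_partialLen he hxe (le_of_max_le_left hA)
    (le_of_max_le_right (le_of_max_le_right hA)) s
  have hle := sum_le_sum fun p (_ : p ∈ edges t A) =>
    sub_slope_mul_partialLen_le (t := t) (x := x) s p
  rw [gRConj_eq_sum (le_of_max_le_left (le_of_max_le_right hA))]
  linarith

lemma exists_gR_eq_mul_sub_gRConj (ht : 1 ≤ t) (hx : t ≤ x) :
    ∃ s, 0 ≤ s ∧ gR t x = s * x - gRConj t s := by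
  obtain ⟨e, he, hxe⟩ := exists_edge_mem_edgeSpan ht hx
  obtain ⟨A, hA⟩ := exists_nat_ge (max x (slope e * t))
  have hsum := sum_sub_slope_mul_partialLen he hxe (le_of_max_le_left hA)
    (le_of_max_le_right hA) (slope e)
  refine ⟨slope e, slope_nonneg e, ?_⟩
  rw [gRConj_eq_sum (le_of_max_le_right hA), ← sum_congr rfl fun p hp =>
    slope_sub_slope_mul_partialLen he hxe (mem_edges.1 hp).2, hsum]
  ring
section Arithmetic

open scoped ArithmeticFunction.Moebius ArithmeticFunction.sigma Nat

lemma sum_divisors_moebius {R : Type*} [Ring R] (n : ℕ) :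
    ∑ d ∈ n.divisors, (μ d : R) = if n = 1 then 1 else 0 := by
  have h := congrArg (· n) (ArithmeticFunction.coe_moebius_mul_coe_zeta (R := R))
  simp only [ArithmeticFunction.coe_mul_zeta_apply, ArithmeticFunction.intCoe_apply,
    ArithmeticFunction.one_apply] at h
  exact h

lemma sum_Icc_filter_dvd {M : Type*} [AddCommMonoid M] (f : ℕ → M) (n : ℕ) {d : ℕ}
    (hd : 0 < d) : ∑ a ∈ Icc 1 n with d ∣ a, f a = ∑ k ∈ Icc 1 (n / d), f (d * k) := by
  refine (sum_nbij' (d * ·) (· / d) ?_ ?_ ?_ ?_ fun _ _ => rfl).symm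
  · intro k hk
    obtain ⟨hk1, hkn⟩ := mem_Icc.1 hk
    refine mem_filter.2
      ⟨mem_Icc.2 ⟨Nat.one_le_iff_ne_zero.2 (by positivity), ?_⟩, dvd_mul_right d k⟩
    rw [Nat.mul_comm]
    exact (Nat.le_div_iff_mul_le hd).1 hkn
  · intro a ha
    obtain ⟨⟨ha1, han⟩, c, rfl⟩ : (1 ≤ a ∧ a ≤ n) ∧ d ∣ a := by simpa using ha
    rw [mem_Icc, Nat.mul_div_cancel_left c hd]
    exact ⟨Nat.one_le_iff_ne_zero.2 (by rintro rfl; simp at ha1),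
      (Nat.le_div_iff_mul_le hd).2 (by rwa [Nat.mul_comm])⟩
  · intro k _
    simp [Nat.mul_div_cancel_left k hd]
  · intro a ha
    simp [Nat.mul_div_cancel' (mem_filter.1 ha).2]

lemma sum_Icc_coprime_eq_sum_moebius {R : Type*} [CommRing R] (f : ℕ → R) (n : ℕ) {b : ℕ}
    (hb : b ≠ 0) : ∑ a ∈ Icc 1 n with a.Coprime b, f a =
      ∑ d ∈ b.divisors, (μ d : R) * ∑ k ∈ Icc 1 (n / d), f (d * k) := by
  have hindicator : ∀ a, (if a.Coprime b then f a else 0) =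
      ∑ d ∈ b.divisors, if d ∣ a then (μ d : R) * f a else 0 := by
    intro a
    rw [← sum_filter, ← sum_mul]
    simp only [Nat.coprime_iff_gcd_eq_one]
    have : {d ∈ b.divisors | d ∣ a} = (a.gcd b).divisors := by
      rw [← Nat.divisors_filter_dvd_of_dvd hb (Nat.gcd_dvd_right a b)]
      refine filter_congr fun d hd => ?_
      rw [Nat.dvd_gcd_iff, and_iff_left (Nat.dvd_of_mem_divisors hd)]
    rw [this, sum_divisors_moebius]
    split_ifs <;> simp
  rw [sum_filter, sum_congr rfl fun a _ => hindicator a, sum_comm]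
  refine sum_congr rfl fun d hd => ?_
  rw [← sum_filter, ← mul_sum, sum_Icc_filter_dvd _ _ (Nat.pos_of_mem_divisors hd)]

lemma card_Icc_filter_coprime (b : ℕ) : #{a ∈ Icc 1 b | a.Coprime b} = φ b := by
  rw [← Nat.filter_coprime_Ico_eq_totient b 1, add_comm, Finset.Ico_add_one_right_eq_Icc]
  simp only [Nat.coprime_comm]

lemma totient_div_eq_sum_moebius {b : ℕ} (hb : b ≠ 0) :
    (φ b : ℝ) / b = ∑ d ∈ b.divisors, (μ d : ℝ) / d := by
  have h := sum_Icc_coprime_eq_sum_moebius (fun _ => (1 : ℝ)) b hb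
  simp only [sum_const, card_Icc_filter_coprime, Nat.card_Icc, add_tsub_cancel_right,
    nsmul_eq_mul, mul_one] at h
  rw [h, sum_div]
  refine sum_congr rfl fun d hd => ?_
  rw [Nat.cast_div (Nat.dvd_of_mem_divisors hd)
    (Nat.cast_ne_zero.2 (Nat.pos_of_mem_divisors hd).ne')]
  field_simp

lemma sum_Icc_sub_mul (y d : ℝ) (n : ℕ) :
    ∑ k ∈ Icc 1 n, (y - d * k) = n * y - d * n * (n + 1) / 2 := by
  induction n with
  | zero => simp
  | succ n ih =>
    rw [sum_Icc_succ_top (by omega), ih]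
    push_cast
    ring

lemma abs_sum_Icc_floor_sub_mul_sub_le {y d : ℝ} (hy : 0 ≤ y) (hd : 0 < d) :
    |∑ k ∈ Icc 1 ⌊y / d⌋₊, (y - d * k) - (y ^ 2 / (2 * d) - y / 2)| ≤ d := by
  set n := ⌊y / d⌋₊
  have hn : n * d ≤ y := (le_div_iff₀ hd).1 (Nat.floor_le (by positivity))
  have hn' : y < (n + 1) * d := (div_lt_iff₀ hd).1 (Nat.lt_floor_add_one _)
  have key : ∑ k ∈ Icc 1 n, (y - d * k) - (y ^ 2 / (2 * d) - y / 2) =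
      (y - n * d) * (d - (y - n * d)) / (2 * d) := by
    rw [sum_Icc_sub_mul]
    field_simp
    ring
  rw [key, abs_le]
  constructor
  · have : 0 ≤ (y - n * d) * (d - (y - n * d)) / (2 * d) := by
      apply div_nonneg _ (by positivity)
      apply mul_nonneg <;> linarith
    linarith
  · rw [div_le_iff₀ (by positivity)]
    nlinarith

noncomputable def coprimeRamp (b : ℕ) (y : ℝ) : ℝ :=
  ∑ a ∈ Icc 1 ⌊y⌋₊ with a.Coprime b, (y - (a : ℝ))

lemma abs_coprimeRamp_sub_le {b : ℕ} (hb : b ≠ 0) {y : ℝ} (hy : 0 ≤ y) :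
    |coprimeRamp b y - (y ^ 2 * φ b / (2 * b) - if b = 1 then y / 2 else 0)| ≤
      (σ 1 b : ℝ) := by
  have hramp : coprimeRamp b y =
      ∑ d ∈ b.divisors, (μ d : ℝ) * ∑ k ∈ Icc 1 ⌊y / d⌋₊, (y - d * k) := by
    rw [coprimeRamp, sum_Icc_coprime_eq_sum_moebius _ _ hb]
    refine sum_congr rfl fun d _ => ?_
    rw [Nat.floor_div_natCast]
    push_cast
    rfl
  have hmain : y ^ 2 * φ b / (2 * b) - (if b = 1 then y / 2 else 0) =
      ∑ d ∈ b.divisors, (μ d : ℝ) * (y ^ 2 / (2 * d) - y / 2) := by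
    have h1 := totient_div_eq_sum_moebius hb
    have h2 := sum_divisors_moebius (R := ℝ) b
    calc _ = y ^ 2 / 2 * ((φ b : ℝ) / b) - y / 2 * (if b = 1 then 1 else 0) := by
          split_ifs <;> ring
      _ = _ := by
          rw [h1, ← h2, mul_sum, mul_sum, ← sum_sub_distrib]
          refine sum_congr rfl fun d _ => ?_
          ring
  rw [hramp, hmain, ← sum_sub_distrib, ArithmeticFunction.sigma_one_apply, Nat.cast_sum]
  refine (abs_sum_le_sum_abs _ _).trans (sum_le_sum fun d hd => ?_)
  have hd : (0 : ℝ) < d := by exact_mod_cast Nat.pos_of_mem_divisors hd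
  rw [← mul_sub, abs_mul]
  calc |(μ d : ℝ)| * |∑ k ∈ Icc 1 ⌊y / d⌋₊, (y - d * k) - (y ^ 2 / (2 * d) - y / 2)|
      ≤ 1 * d := by
        gcongr
        · exact_mod_cast ArithmeticFunction.abs_moebius_le_one
        · exact abs_sum_Icc_floor_sub_mul_sub_le hy hd
    _ = d := one_mul _

lemma sigma_one_le_mul_one_add_log (b : ℕ) : (σ 1 b : ℝ) ≤ b * (1 + Real.log b) := by
  rw [ArithmeticFunction.sigma_one_apply, ← Nat.sum_div_divisors, Nat.cast_sum]
  calc ∑ d ∈ b.divisors, ((b / d : ℕ) : ℝ) ≤ ∑ d ∈ b.divisors, (b : ℝ) / d :=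
        sum_le_sum fun _ _ => Nat.cast_div_le
    _ ≤ ∑ d ∈ Icc 1 b, (b : ℝ) / d :=
        sum_le_sum_of_subset_of_nonneg (fun d hd => mem_Icc.2
          ⟨Nat.pos_of_mem_divisors hd, Nat.divisor_le hd⟩) fun _ _ _ => by positivity
    _ = b * harmonic b := by simp [harmonic_eq_sum_Icc, mul_sum, div_eq_mul_inv]
    _ ≤ b * (1 + Real.log b) := by gcongr; exact harmonic_le_one_add_log b

lemma sum_Icc_filter_max_sub_eq_coprimeRamp {b A : ℕ} {y : ℝ} (hy : 0 ≤ y) (hA : y ≤ A) :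
    ∑ a ∈ Icc 1 A with a.Coprime b, max (y - a) 0 = coprimeRamp b y := by
  have hsub : {a ∈ Icc 1 ⌊y⌋₊ | a.Coprime b} ⊆ {a ∈ Icc 1 A | a.Coprime b} :=
    filter_subset_filter _ (Icc_subset_Icc_right (Nat.floor_le_of_le hA))
  rw [coprimeRamp, ← sum_subset hsub fun a ha hna => ?_]
  · refine sum_congr rfl fun a ha => max_eq_left ?_
    have := (mem_Icc.1 (mem_filter.1 ha).1).2
    rwa [sub_nonneg, ← Nat.le_floor_iff hy]
  · obtain ⟨ha, hab⟩ := mem_filter.1 ha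
    have hya : y < a := (Nat.floor_lt hy).1 <| not_le.1 fun h =>
      hna (mem_filter.2 ⟨mem_Icc.2 ⟨(mem_Icc.1 ha).1, h⟩, hab⟩)
    exact max_eq_right (by linarith)

lemma gRConj_eq_sum_coprimeRamp {s : ℝ} (hs : 0 ≤ s) :
    gRConj t s = s * t + ∑ b ∈ Icc 1 t, ((t / b : ℕ) : ℝ) * coprimeRamp b (s * b) := by
  have hA : s * t ≤ (⌈s⌉₊ * t : ℕ) := by push_cast; gcongr; exact Nat.le_ceil s
  rw [gRConj_eq_sum hA, edges, sum_filter, sum_product_right]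
  congr 1
  refine sum_congr rfl fun b hb => ?_
  obtain ⟨hb1, hbt⟩ := mem_Icc.1 hb
  have hsb : s * b ≤ (⌈s⌉₊ * t : ℕ) := hA.trans' (by gcongr)
  rw [← sum_Icc_filter_max_sub_eq_coprimeRamp (by positivity) hsb, mul_sum, sum_filter]
  refine sum_congr rfl fun a ha => ?_
  have ha1 := (mem_Icc.1 ha).1
  by_cases hab : a.Coprime b
  · have hb0 : (0 : ℝ) < b := by exact_mod_cast hb1
    rw [if_pos ⟨ha1, hb1, hbt, hab⟩, if_pos hab, edgeLen, slope, Nat.cast_mul,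
      ← mul_assoc, max_mul_of_nonneg _ _ hb0.le, sub_mul, div_mul_cancel₀ _ hb0.ne', zero_mul,
      mul_comm]
  · rw [if_neg fun h => hab h.2.2.2, if_neg hab]

lemma Hper_eq_sum (t : ℕ) : Hper t = ∑ b ∈ Icc 1 t, t / b * b * φ b := by
  rw [Hper, sum_filter, sum_product]
  refine sum_congr rfl fun b hb => ?_
  dsimp only
  rw [← sum_filter, sum_const, smul_eq_mul, mul_comm, ← card_Icc_filter_coprime]
  congr 2
  ext a
  simp only [mem_filter, mem_Icc, Nat.coprime_comm, Nat.Coprime]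
  have := (mem_Icc.1 hb).2
  constructor
  · rintro ⟨⟨h1, -⟩, h2, h3⟩; exact ⟨⟨h1, h2⟩, h3⟩
  · rintro ⟨⟨h1, h2⟩, h3⟩; exact ⟨⟨h1, h2.trans this⟩, h2, h3⟩

lemma le_Hper (ht : 1 ≤ t) : t ≤ Hper t := by
  rw [Hper_eq_sum]
  calc t = t / 1 * 1 * φ 1 := by simp
    _ ≤ _ := single_le_sum (f := fun b => t / b * b * φ b) (fun _ _ => Nat.zero_le _)
      (mem_Icc.2 ⟨le_rfl, ht⟩)

lemma abs_gRConj_sub_le (ht : 1 ≤ t) {s : ℝ} (hs : 0 ≤ s) :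
    |gRConj t s - (s * t / 2 + s ^ 2 * Hper t / 2)| ≤ t ^ 2 * (1 + Real.log t) := by
  have hmain : s * t / 2 + s ^ 2 * Hper t / 2 = s * t + ∑ b ∈ Icc 1 t, ((t / b : ℕ) : ℝ) *
      ((s * b) ^ 2 * φ b / (2 * b) - if b = 1 then s * b / 2 else 0) := by
    have hlin :
        ∑ b ∈ Icc 1 t, ((t / b : ℕ) : ℝ) * (if b = 1 then s * b / 2 else 0) = s * t / 2 := by
      simp_rw [mul_ite, mul_zero]
      rw [sum_ite_eq', if_pos (mem_Icc.2 ⟨le_rfl, ht⟩)]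
      simp only [Nat.div_one, Nat.cast_one, mul_one]
      ring
    have hquad : ∑ b ∈ Icc 1 t, ((t / b : ℕ) : ℝ) * ((s * b) ^ 2 * φ b / (2 * b)) =
        s ^ 2 * Hper t / 2 := by
      rw [Hper_eq_sum, Nat.cast_sum, mul_sum, sum_div]
      refine sum_congr rfl fun b hb => ?_
      have : (b : ℝ) ≠ 0 := Nat.cast_ne_zero.2 (Nat.one_le_iff_ne_zero.1 (mem_Icc.1 hb).1)
      push_cast
      field_simp
    simp_rw [mul_sub, sum_sub_distrib, hquad, hlin]
    ring
  rw [gRConj_eq_sum_coprimeRamp hs, hmain, add_sub_add_left_eq_sub, ← sum_sub_distrib]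
  calc |∑ b ∈ Icc 1 t, (((t / b : ℕ) : ℝ) * coprimeRamp b (s * b) - ((t / b : ℕ) : ℝ) *
        ((s * b) ^ 2 * φ b / (2 * b) - if b = 1 then s * b / 2 else 0))|
      ≤ ∑ b ∈ Icc 1 t, ((t / b : ℕ) : ℝ) * (b * (1 + Real.log t)) := by
        refine (abs_sum_le_sum_abs _ _).trans (sum_le_sum fun b hb => ?_)
        obtain ⟨hb1, hbt⟩ := mem_Icc.1 hb
        rw [← mul_sub, abs_mul, Nat.abs_cast]
        gcongr
        refine (abs_coprimeRamp_sub_le (by omega) (by positivity)).trans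
          ((sigma_one_le_mul_one_add_log b).trans ?_)
        gcongr
    _ ≤ ∑ b ∈ Icc 1 t, (t : ℝ) * (1 + Real.log t) := by
        refine sum_le_sum fun b hb => ?_
        rw [← mul_assoc]
        gcongr
        exact_mod_cast Nat.div_mul_le_self t b
    _ = t ^ 2 * (1 + Real.log t) := by simp; ring

end Arithmetic

lemma abs_gR_sub_le (ht : 1 ≤ t) (hx : t / 2 ≤ x) :
    |gR t x - (x - t / 2) ^ 2 / (2 * Hper t)| ≤ t ^ 2 * (1 + Real.log t) := by
  have ht1 : (1 : ℝ) ≤ t := by exact_mod_cast ht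
  have htH : (t : ℝ) ≤ Hper t := by exact_mod_cast le_Hper ht
  have hH : (0 : ℝ) < Hper t := by linarith
  have hlog : 0 ≤ Real.log t := Real.log_nonneg ht1
  rcases le_or_gt (t : ℝ) x with hxt | hxt
  · rw [abs_le]
    constructor
    · set s := (x - t / 2) / Hper t
      have hs : 0 ≤ s := div_nonneg (by linarith) hH.le
      have hconj := (abs_le.1 (abs_gRConj_sub_le ht hs)).2
      have hsx : s * x - (s * t / 2 + s ^ 2 * Hper t / 2) = (x - t / 2) ^ 2 / (2 * Hper t) := by
        simp only [s]; field_simp; ring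
      linarith [mul_sub_gRConj_le_gR ht hxt s]
    · obtain ⟨s, hs, hgR⟩ := exists_gR_eq_mul_sub_gRConj ht hxt
      have hconj := (abs_le.1 (abs_gRConj_sub_le ht hs)).1
      have hsx : s * x - (s * t / 2 + s ^ 2 * Hper t / 2) ≤ (x - t / 2) ^ 2 / (2 * Hper t) := by
        rw [← sub_nonneg]
        have : (x - t / 2) ^ 2 / (2 * Hper t) - (s * x - (s * t / 2 + s ^ 2 * Hper t / 2)) =
            (s * Hper t - (x - t / 2)) ^ 2 / (2 * Hper t) := by field_simp; ring
        rw [this]; positivity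
      linarith
  · rw [gR_of_le hxt.le, zero_sub, abs_neg, abs_of_nonneg (by positivity),
      div_le_iff₀ (by positivity)]
    have h1 : (x - t / 2) ^ 2 ≤ t ^ 2 := by nlinarith
    have h2 : 1 ≤ (1 + Real.log t) * (2 * Hper t) :=
      one_le_mul_of_one_le_of_one_le (by linarith) (by linarith)
    nlinarith

end GridParabola

/-- The vertical distance between the grid parabola P_t and the reference
parabola y = (x - t/2)²/(2·H_t) is O(t² log t). -/
theorem gridParabola_near_reference :
    ∃ C : ℝ, 0 < C ∧ ∀ (t : ℕ) (x : ℝ), 2 ≤ t →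
      |gridParabola t x - (x - (t : ℝ) / 2) ^ 2 / (2 * (Hper t : ℝ))|
        ≤ C * (t : ℝ) ^ 2 * Real.log t := by
  refine ⟨3, by norm_num, fun t x ht => ?_⟩
  have hbound :
      |gridParabola t x - (x - t / 2) ^ 2 / (2 * Hper t)| ≤ t ^ 2 * (1 + Real.log t) := by
    rw [gridParabola]
    split_ifs with h
    · simpa only [show ((t : ℝ) - x - t / 2) ^ 2 = (x - t / 2) ^ 2 by ring]
        using GridParabola.abs_gR_sub_le (t := t) (x := t - x) (by omega) (by linarith)
    · exact GridParabola.abs_gR_sub_le (by omega) (by linarith)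
  have hlog : 1 / 2 < Real.log t := Real.log_two_gt_d9.trans_le' (by norm_num) |>.trans_le
    (Real.log_le_log (by norm_num) (by exact_mod_cast ht))
  nlinarith [sq_nonneg (t : ℝ)]
end

section
/- Let g : ℝ → ℝ be a convex function. Then the lower and upper average speeds v_-(g) and v_+(g) are unchanged by horizontal translation by an integer distance and by arbitrary vertical translation: for every integer k and every real γ, v_-(x ↦ g(x − k) + γ) = v_-(g) and v_+(x ↦ g(x − k) + γ) = v_+(g). -/
/-- The lattice points on or above the graph of `g`. -/
def Ugrid (g : ℝ → ℝ) : Set (ℝ × ℝ) :=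
  {p | (∃ i j : ℤ, p = ((i : ℝ), (j : ℝ))) ∧ g p.1 ≤ p.2}

/-- Lower average speed of the grid peeling process started on `{(x,y) ∈ ℤ² : y ≥ g x}`. -/
noncomputable def vLower (g : ℝ → ℝ) : ℝ :=
  Filter.liminf (fun m : ℕ =>
    sSup {γ : ℝ | peel^[m] (Ugrid g) ⊆ Ugrid (fun x => g x + γ)} / m) Filter.atTop

/-- Upper average speed of the grid peeling process started on `{(x,y) ∈ ℤ² : y ≥ g x}`. -/
noncomputable def vUpper (g : ℝ → ℝ) : ℝ :=
  Filter.limsup (fun m : ℕ =>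
    sInf {γ : ℝ | Ugrid (fun x => g x + γ) ⊆ peel^[m] (Ugrid g)} / m) Filter.atTop

open Set Filter Pointwise Topology

namespace Real

variable {A B : Set ℝ} {c : ℝ}

/-- `A` and `B` are empty, or unbounded above, together, so the junk value `sSup = 0` is covered. -/
theorem sSup_le_sSup_add_of_forall_sub_mem (hc : 0 ≤ c) (hAB : ∀ a ∈ A, a - c ∈ B)
    (hBA : ∀ b ∈ B, b - c ∈ A) : sSup A ≤ sSup B + c := by
  rcases A.eq_empty_or_nonempty with rfl | hA
  · have hB : B = ∅ := eq_empty_of_forall_notMem fun b hb => hBA b hb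
    simpa [hB] using hc
  by_cases hBbdd : BddAbove B
  · exact csSup_le hA fun a ha => by linarith [le_csSup hBbdd (hAB a ha)]
  · have hAbdd : ¬ BddAbove A := by
      rintro ⟨M, hM⟩
      exact hBbdd ⟨M + c, fun b hb => by linarith [hM (hBA b hb)]⟩
    simpa [sSup_of_not_bddAbove hAbdd, sSup_of_not_bddAbove hBbdd] using hc

theorem abs_sSup_sub_sSup_le_of_forall_sub_mem (hc : 0 ≤ c) (hAB : ∀ a ∈ A, a - c ∈ B)
    (hBA : ∀ b ∈ B, b - c ∈ A) : |sSup A - sSup B| ≤ c := by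
  rw [abs_sub_le_iff]
  constructor
  · linarith [sSup_le_sSup_add_of_forall_sub_mem hc hAB hBA]
  · linarith [sSup_le_sSup_add_of_forall_sub_mem hc hBA hAB]

theorem abs_sInf_sub_sInf_le_of_forall_add_mem (hc : 0 ≤ c) (hAB : ∀ a ∈ A, a + c ∈ B)
    (hBA : ∀ b ∈ B, b + c ∈ A) : |sInf A - sInf B| ≤ c := by
  have neg_mem {S T : Set ℝ} (hST : ∀ s ∈ S, s + c ∈ T) (x : ℝ) (hx : x ∈ -S) : x - c ∈ -T := by
    simpa [neg_add_eq_sub] using hST (-x) hx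
  rw [sInf_def, sInf_def, neg_sub_neg, abs_sub_comm]
  exact abs_sSup_sub_sSup_le_of_forall_sub_mem hc (neg_mem hAB) (neg_mem hBA)

end Real

section LiminfLimsup

variable {ι : Type*} {f : Filter ι} {u v : ι → ℝ}

theorem liminf_eq_liminf_of_tendsto_sub (h : Tendsto (u - v) f (𝓝 0)) :
    liminf u f = liminf v f := by
  refine eq_of_forall_dist_le fun ε hε => ?_
  have close : ∀ᶠ n in f, |u n - v n| ≤ ε :=
    (Metric.tendsto_nhds.mp h ε hε).mono fun n hn => by simpa using hn.le
  rw [liminf_eq, liminf_eq, Real.dist_eq]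
  refine Real.abs_sSup_sub_sSup_le_of_forall_sub_mem hε.le ?_ ?_
  · exact fun a ha => (ha.and close).mono fun n ⟨han, hn⟩ => by linarith [(abs_le.mp hn).2]
  · exact fun a ha => (ha.and close).mono fun n ⟨han, hn⟩ => by linarith [(abs_le.mp hn).1]

theorem limsup_eq_limsup_of_tendsto_sub (h : Tendsto (u - v) f (𝓝 0)) :
    limsup u f = limsup v f := by
  refine eq_of_forall_dist_le fun ε hε => ?_
  have close : ∀ᶠ n in f, |u n - v n| ≤ ε :=
    (Metric.tendsto_nhds.mp h ε hε).mono fun n hn => by simpa using hn.le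
  rw [limsup_eq, limsup_eq, Real.dist_eq]
  refine Real.abs_sInf_sub_sInf_le_of_forall_add_mem hε.le ?_ ?_
  · exact fun a ha => (ha.and close).mono fun n ⟨han, hn⟩ => by linarith [(abs_le.mp hn).1]
  · exact fun a ha => (ha.and close).mono fun n ⟨han, hn⟩ => by linarith [(abs_le.mp hn).2]

end LiminfLimsup

theorem tendsto_div_natCast_sub_div_natCast {u v : ℕ → ℝ} {C : ℝ} (h : ∀ m, |u m - v m| ≤ C) :
    Tendsto (fun m : ℕ => u m / m - v m / m) atTop (𝓝 0) := by
  refine squeeze_zero_norm (fun m => ?_) (tendsto_const_div_atTop_nhds_zero_nat C)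
  rw [← sub_div, norm_div, Real.norm_eq_abs, Real.norm_natCast]
  exact div_le_div_of_nonneg_right (h m) m.cast_nonneg

theorem extremePoints_vadd {𝕜 E : Type*} [Ring 𝕜] [PartialOrder 𝕜] [IsOrderedRing 𝕜]
    [AddCommGroup E] [Module 𝕜 E] (v : E) (s : Set E) :
    extremePoints 𝕜 (v +ᵥ s) = v +ᵥ extremePoints 𝕜 s := by
  ext x
  obtain ⟨y, rfl⟩ : ∃ y, x = v +ᵥ y := ⟨-v +ᵥ x, by simp⟩
  simp only [mem_extremePoints_iff_left, mem_vadd_set, forall_exists_index, and_imp,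
    forall_apply_eq_imp_iff₂, ← vadd_openSegment, vadd_left_cancel_iff, exists_eq_right]

theorem peel_monotone : Monotone peel := fun _ _ hUV _ ⟨hpU, hpe⟩ =>
  ⟨hUV hpU, fun hext => hpe ⟨subset_convexHull ℝ _ hpU, fun _ h₁ _ h₂ hseg =>
    hext.2 (convexHull_mono hUV h₁) (convexHull_mono hUV h₂) hseg⟩⟩

theorem peel_vadd (v : ℝ × ℝ) (U : Set (ℝ × ℝ)) : peel (v +ᵥ U) = v +ᵥ peel U := by
  rw [peel, peel, convexHull_vadd, extremePoints_vadd, vadd_set_sdiff]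

theorem peel_iterate_vadd (m : ℕ) (v : ℝ × ℝ) (U : Set (ℝ × ℝ)) :
    peel^[m] (v +ᵥ U) = v +ᵥ peel^[m] U :=
  Function.Commute.iterate_left (fun U => peel_vadd v U) m U

theorem Ugrid_antitone {g h : ℝ → ℝ} (hgh : ∀ x, g x ≤ h x) : Ugrid h ⊆ Ugrid g :=
  fun p hp => ⟨hp.1, (hgh p.1).trans hp.2⟩

theorem vadd_Ugrid (g : ℝ → ℝ) (k c : ℤ) :
    ((k : ℝ), (c : ℝ)) +ᵥ Ugrid g = Ugrid (fun x => g (x - k) + c) := by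
  ext ⟨x, y⟩
  simp only [mem_vadd_set_iff_neg_vadd_mem, Ugrid, mem_ofPred_eq, vadd_eq_add, Prod.neg_mk,
    Prod.mk_add_mk, Prod.mk.injEq, neg_add_eq_sub]
  constructor
  · rintro ⟨⟨i, j, hi, hj⟩, hle⟩
    exact ⟨⟨i + k, j + c, by push_cast; linarith, by push_cast; linarith⟩, by linarith⟩
  · rintro ⟨⟨i, j, rfl, rfl⟩, hle⟩
    exact ⟨⟨i - k, j - c, by push_cast; ring, by push_cast; ring⟩, by linarith⟩

/-- `vLower g` and `vUpper g` are the `liminf` of `sSup (lowerShifts g m) / m` and the `limsup` of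
`sInf (upperShifts g m) / m`. -/
def lowerShifts (g : ℝ → ℝ) (m : ℕ) : Set ℝ :=
  {γ | peel^[m] (Ugrid g) ⊆ Ugrid (fun x => g x + γ)}

def upperShifts (g : ℝ → ℝ) (m : ℕ) : Set ℝ :=
  {γ | Ugrid (fun x => g x + γ) ⊆ peel^[m] (Ugrid g)}

theorem Ugrid_add_eq_vadd (g : ℝ → ℝ) (k c : ℤ) (δ : ℝ) :
    Ugrid (fun x => g (x - k) + c + δ) = ((k : ℝ), (c : ℝ)) +ᵥ Ugrid (fun x => g x + δ) := by
  rw [vadd_Ugrid]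
  exact congrArg Ugrid (funext fun x => add_right_comm _ _ _)

theorem lowerShifts_intTranslate (g : ℝ → ℝ) (k c : ℤ) (m : ℕ) :
    lowerShifts (fun x => g (x - k) + c) m = lowerShifts g m := by
  ext δ
  simp only [lowerShifts, mem_ofPred_eq]
  rw [← vadd_Ugrid, Ugrid_add_eq_vadd, peel_iterate_vadd, vadd_set_subset_vadd_set_iff]

theorem upperShifts_intTranslate (g : ℝ → ℝ) (k c : ℤ) (m : ℕ) :
    upperShifts (fun x => g (x - k) + c) m = upperShifts g m := by
  ext δ
  simp only [upperShifts, mem_ofPred_eq]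
  rw [← vadd_Ugrid, Ugrid_add_eq_vadd, peel_iterate_vadd, vadd_set_subset_vadd_set_iff]

section Squeeze

variable {g h : ℝ → ℝ} {a δ : ℝ} {m : ℕ}

theorem sub_mem_lowerShifts (hhg : ∀ x, h x ≤ g x) (hgh : ∀ x, g x ≤ h x + a)
    (hδ : δ ∈ lowerShifts h m) : δ - a ∈ lowerShifts g m :=
  ((peel_monotone.iterate m) (Ugrid_antitone hhg)).trans <|
    hδ.trans <| Ugrid_antitone fun x => by linarith [hgh x]

theorem add_mem_upperShifts (hhg : ∀ x, h x ≤ g x) (hgh : ∀ x, g x ≤ h x + a)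
    (hδ : δ ∈ upperShifts g m) : δ + a ∈ upperShifts h m :=
  (Ugrid_antitone fun x => by linarith [hgh x]).trans <|
    hδ.trans <| (peel_monotone.iterate m) (Ugrid_antitone hhg)

end Squeeze

section Translate

variable (g : ℝ → ℝ) (k : ℤ) (γ : ℝ) (m : ℕ)

/-- `g (· - k) + γ` lies between the integer shifts by `⌈γ⌉ - 1` and `⌈γ⌉`. -/
theorem abs_sSup_lowerShifts_translate_sub_le :
    |sSup (lowerShifts (fun x => g (x - k) + γ) m) - sSup (lowerShifts g m)| ≤ 1 := by
  have hle := Int.le_ceil γ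
  have hlt := Int.ceil_lt_add_one γ
  refine Real.abs_sSup_sub_sSup_le_of_forall_sub_mem zero_le_one (fun δ hδ => ?_) fun δ hδ => ?_
  · rw [← lowerShifts_intTranslate g k ⌈γ⌉]
    exact sub_mem_lowerShifts (fun x => by linarith) (fun x => by linarith) hδ
  · rw [← lowerShifts_intTranslate g k (⌈γ⌉ - 1)] at hδ
    exact sub_mem_lowerShifts (fun x => by push_cast; linarith)
      (fun x => by push_cast; linarith) hδ

theorem abs_sInf_upperShifts_translate_sub_le :
    |sInf (upperShifts (fun x => g (x - k) + γ) m) - sInf (upperShifts g m)| ≤ 1 := by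
  have hle := Int.le_ceil γ
  have hlt := Int.ceil_lt_add_one γ
  refine Real.abs_sInf_sub_sInf_le_of_forall_add_mem zero_le_one (fun δ hδ => ?_) fun δ hδ => ?_
  · rw [← upperShifts_intTranslate g k (⌈γ⌉ - 1)]
    exact add_mem_upperShifts (fun x => by push_cast; linarith)
      (fun x => by push_cast; linarith) hδ
  · rw [← upperShifts_intTranslate g k ⌈γ⌉] at hδ
    exact add_mem_upperShifts (fun x => by linarith) (fun x => by linarith) hδ

end Translate

theorem averageSpeed_invariant_general (g : ℝ → ℝ) (k : ℤ) (γ : ℝ) :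
    vLower (fun x => g (x - k) + γ) = vLower g ∧
    vUpper (fun x => g (x - k) + γ) = vUpper g :=
  ⟨liminf_eq_liminf_of_tendsto_sub <| tendsto_div_natCast_sub_div_natCast <|
      abs_sSup_lowerShifts_translate_sub_le g k γ,
    limsup_eq_limsup_of_tendsto_sub <| tendsto_div_natCast_sub_div_natCast <|
      abs_sInf_upperShifts_translate_sub_le g k γ⟩

/-- The average speeds are invariant under horizontal translation by an integer
distance and arbitrary vertical translation. -/
theorem averageSpeed_invariant (g : ℝ → ℝ) (hg : ConvexOn ℝ Set.univ g)
    (k : ℤ) (γ : ℝ) :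
    vLower (fun x => g (x - k) + γ) = vLower g ∧
    vUpper (fun x => g (x - k) + γ) = vUpper g :=
  averageSpeed_invariant_general g k γ
end

section
/- There exists a constant C > 0 such that for every real u ≥ 2 and every real α with 0 ≤ α ≤ 1, writing Rx(u, α) = Σ x and Ry(u, α) = Σ y, where both sums are taken over all pairs of integers (x, y) with 1 ≤ x ≤ u, 1 ≤ y ≤ α·x, and gcd(x, y) = 1, one has |Rx(u, α) − (2/π²)·u³·α| ≤ C·u²·log u and |Ry(u, α) − (1/π²)·u³·α²| ≤ C·u²·log u. -/
open scoped Classical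

/-- `Rx(u,α) = Σ x` over primitive integer pairs (x,y) with 1 ≤ x ≤ u, 1 ≤ y ≤ α·x. -/
noncomputable def Rx (u α : ℝ) : ℝ :=
  ∑ x ∈ Finset.Icc 1 ⌊u⌋₊, ∑ y ∈ Finset.Icc 1 ⌊u⌋₊,
    if (y : ℝ) ≤ α * (x : ℝ) ∧ Nat.gcd x y = 1 then (x : ℝ) else 0

/-- `Ry(u,α) = Σ y` over primitive integer pairs (x,y) with 1 ≤ x ≤ u, 1 ≤ y ≤ α·x. -/
noncomputable def Ry (u α : ℝ) : ℝ :=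
  ∑ x ∈ Finset.Icc 1 ⌊u⌋₊, ∑ y ∈ Finset.Icc 1 ⌊u⌋₊,
    if (y : ℝ) ≤ α * (x : ℝ) ∧ Nat.gcd x y = 1 then (y : ℝ) else 0

/-!
Möbius inversion over `d = gcd(x, y)` turns each primitive sum into `∑_{d ≤ N} μ(d) d T(N / d)`,
where `N = ⌊u⌋` and `T(M)` is the same weighted sum over all lattice points of the triangle
(the weights `x` and `y` are homogeneous of degree one). Summing along vertical lines gives
`T(M) = β M³ + O(M²)`, with `β = α / 3` for the weight `x` and `β = α² / 6` for the weight `y`.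
The errors contribute `O(N² ∑_{d ≤ N} 1 / d) = O(u² log u)`, and the main terms add up to
`β N³ ∑_{d ≤ N} μ(d) / d² = (6 / π²) β N³ + O(N²)`, because `∑ μ(n) / n² = 1 / ζ(2)`.
-/

open ArithmeticFunction Finset Filter Topology
open scoped ArithmeticFunction.Moebius

theorem sum_Icc_ite_dvd {R : Type*} [AddCommMonoid R] {d : ℕ} (hd : 0 < d) (N : ℕ)
    (h : ℕ → R) :
    ∑ x ∈ Icc 1 N, (if d ∣ x then h x else 0) = ∑ m ∈ Icc 1 (N / d), h (d * m) := by
  have hfilter : {x ∈ Icc 1 N | d ∣ x} = (Icc 1 (N / d)).image (d * ·) := by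
    ext x
    simp only [mem_filter, mem_Icc, mem_image, Nat.le_div_iff_mul_le hd]
    constructor
    · rintro ⟨⟨hx1, hxN⟩, m, rfl⟩
      exact ⟨m, ⟨Nat.pos_of_mul_pos_left hx1, by linarith⟩, rfl⟩
    · rintro ⟨m, ⟨hm1, hmN⟩, rfl⟩
      exact ⟨⟨Nat.mul_pos hd hm1, by linarith⟩, dvd_mul_right d m⟩
  rw [← sum_filter, hfilter, sum_image fun a _ b _ hab => Nat.eq_of_mul_eq_mul_left hd hab]

theorem sum_Icc_moebius_ite_dvd_dvd {R : Type*} [Ring R] {N x : ℕ} (hx : x ≠ 0) (hxN : x ≤ N)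
    (y : ℕ) :
    ∑ d ∈ Icc 1 N, (if d ∣ x ∧ d ∣ y then (μ d : R) else 0) = if x.gcd y = 1 then 1 else 0 := by
  have hfilter : {d ∈ Icc 1 N | d ∣ x ∧ d ∣ y} = (x.gcd y).divisors := by
    ext d
    simp only [mem_filter, mem_Icc, Nat.mem_divisors, ← Nat.dvd_gcd_iff]
    constructor
    · rintro ⟨-, hd⟩
      exact ⟨hd, Nat.gcd_ne_zero_left hx⟩
    · rintro ⟨hd, hg⟩
      have hdg := Nat.le_of_dvd (Nat.pos_of_ne_zero hg) hd
      have hgx := Nat.le_of_dvd (Nat.pos_of_ne_zero hx) (Nat.gcd_dvd_left x y)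
      exact ⟨⟨Nat.pos_of_dvd_of_pos hd (Nat.pos_of_ne_zero hg), by omega⟩, hd⟩
  simp_rw [← sum_filter, hfilter, ← intCoe_apply, ← coe_mul_zeta_apply, coe_moebius_mul_coe_zeta,
    one_apply]

theorem sum_coprime_eq_sum_moebius {R : Type*} [Ring R] (N : ℕ) (f : ℕ → ℕ → R) :
    ∑ x ∈ Icc 1 N, ∑ y ∈ Icc 1 N, (if x.gcd y = 1 then f x y else 0) =
      ∑ d ∈ Icc 1 N, (μ d : R) * ∑ m ∈ Icc 1 (N / d), ∑ k ∈ Icc 1 (N / d), f (d * m) (d * k) := by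
  calc _ = ∑ x ∈ Icc 1 N, ∑ y ∈ Icc 1 N, ∑ d ∈ Icc 1 N,
        (if d ∣ x ∧ d ∣ y then (μ d : R) * f x y else 0) := by
        refine sum_congr rfl fun x hx => sum_congr rfl fun y _ => ?_
        rw [mem_Icc] at hx
        rw [← boole_mul, ← sum_Icc_moebius_ite_dvd_dvd (by omega) hx.2, sum_mul]
        simp only [ite_mul, zero_mul]
    _ = ∑ d ∈ Icc 1 N, ∑ x ∈ Icc 1 N, ∑ y ∈ Icc 1 N,
        (if d ∣ x ∧ d ∣ y then (μ d : R) * f x y else 0) :=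
        (sum_congr rfl fun _ _ => sum_comm).trans sum_comm
    _ = _ := by
        refine sum_congr rfl fun d hd => ?_
        have hd : 0 < d := (mem_Icc.1 hd).1
        simp_rw [ite_and, sum_ite_irrel, sum_const_zero, sum_Icc_ite_dvd hd, mul_sum]

noncomputable def triangleSum (α : ℝ) (W : ℕ → ℕ → ℝ) (N : ℕ) : ℝ :=
  ∑ x ∈ Icc 1 N, ∑ y ∈ Icc 1 N, if (y : ℝ) ≤ α * x then W x y else 0

theorem sum_primitive_eq_sum_moebius_mul_triangleSum (α : ℝ) (N : ℕ) {W : ℕ → ℕ → ℝ}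
    (hW : ∀ d x y, W (d * x) (d * y) = d * W x y) :
    ∑ x ∈ Icc 1 N, ∑ y ∈ Icc 1 N, (if (y : ℝ) ≤ α * x ∧ x.gcd y = 1 then W x y else 0) =
      ∑ d ∈ Icc 1 N, (μ d : ℝ) * (d * triangleSum α W (N / d)) := by
  simp_rw [and_comm (a := (_ : ℝ) ≤ _), ite_and]
  rw [sum_coprime_eq_sum_moebius]
  refine sum_congr rfl fun d hd => ?_
  have hd : (0 : ℝ) < d := by exact_mod_cast (mem_Icc.1 hd).1
  simp_rw [triangleSum, mul_sum, mul_ite, mul_zero, hW, Nat.cast_mul, mul_left_comm α,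
    mul_le_mul_iff_right₀ hd]

theorem triangleSum_eq_sum_Icc_floor {α : ℝ} (hα : α ≤ 1) (W : ℕ → ℕ → ℝ) (N : ℕ) :
    triangleSum α W N = ∑ x ∈ Icc 1 N, ∑ y ∈ Icc 1 ⌊α * x⌋₊, W x y := by
  refine sum_congr rfl fun x hx => ?_
  rw [← sum_filter]
  congr 1
  ext y
  simp only [mem_filter, mem_Icc]
  constructor
  · rintro ⟨⟨hy, -⟩, hyx⟩
    exact ⟨hy, (Nat.le_floor_iff' (by omega)).2 hyx⟩
  · rintro ⟨hy, hyx⟩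
    rw [Nat.le_floor_iff' (by omega)] at hyx
    have hxN : (x : ℝ) ≤ N := by exact_mod_cast (mem_Icc.1 hx).2
    have hαx : α * x ≤ x := mul_le_of_le_one_left (Nat.cast_nonneg x) hα
    exact ⟨⟨hy, by exact_mod_cast hyx.trans (hαx.trans hxN)⟩, hyx⟩

theorem abs_sum_Icc_sq_sub_cube_le (M : ℕ) :
    |∑ m ∈ Icc 1 M, (m : ℝ) ^ 2 - M ^ 3 / 3| ≤ (M : ℝ) ^ 2 := by
  suffices (M : ℝ) ^ 3 / 3 ≤ ∑ m ∈ Icc 1 M, (m : ℝ) ^ 2 ∧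
      ∑ m ∈ Icc 1 M, (m : ℝ) ^ 2 ≤ M ^ 3 / 3 + M ^ 2 by
    rw [abs_le]; constructor <;> linarith [sq_nonneg (M : ℝ)]
  induction M with
  | zero => simp
  | succ n ih =>
    rw [sum_Icc_succ_top (by omega)]
    push_cast
    constructor <;> nlinarith [ih.1, ih.2, (Nat.cast_nonneg n : (0 : ℝ) ≤ n)]

theorem sum_Icc_id_le_sq (M : ℕ) : ∑ m ∈ Icc 1 M, (m : ℝ) ≤ M ^ 2 := by
  calc ∑ m ∈ Icc 1 M, (m : ℝ) ≤ #(Icc 1 M) • (M : ℝ) :=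
        sum_le_card_nsmul _ _ _ fun m hm => by exact_mod_cast (mem_Icc.1 hm).2
    _ = M ^ 2 := by simp [sq]

theorem abs_sum_Icc_sub_cube_le {c : ℝ} (hc0 : 0 ≤ c) (hc1 : c ≤ 1) {g : ℕ → ℝ}
    (hg : ∀ m, |g m - c * m ^ 2| ≤ m) (M : ℕ) :
    |∑ m ∈ Icc 1 M, g m - c / 3 * M ^ 3| ≤ 2 * (M : ℝ) ^ 2 := by
  have hpointwise : |∑ m ∈ Icc 1 M, g m - c * ∑ m ∈ Icc 1 M, (m : ℝ) ^ 2| ≤ M ^ 2 := by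
    rw [mul_sum, ← sum_sub_distrib]
    exact (abs_sum_le_sum_abs _ _).trans ((sum_le_sum fun m _ => hg m).trans (sum_Icc_id_le_sq M))
  have hsq : |c * ∑ m ∈ Icc 1 M, (m : ℝ) ^ 2 - c / 3 * M ^ 3| ≤ (M : ℝ) ^ 2 := by
    rw [show c / 3 * (M : ℝ) ^ 3 = c * (M ^ 3 / 3) by ring, ← mul_sub, abs_mul, abs_of_nonneg hc0]
    exact (mul_le_of_le_one_left (abs_nonneg _) hc1).trans (abs_sum_Icc_sq_sub_cube_le M)
  linarith [abs_sub_le (∑ m ∈ Icc 1 M, g m) (c * ∑ m ∈ Icc 1 M, (m : ℝ) ^ 2) (c / 3 * M ^ 3)]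

theorem sum_Icc_id_mul_two (n : ℕ) : (∑ k ∈ Icc 1 n, (k : ℝ)) * 2 = n * (n + 1) := by
  induction n with
  | zero => simp
  | succ n ih =>
    rw [sum_Icc_succ_top (by omega), add_mul, ih]
    push_cast
    ring

theorem abs_triangleSum_fst_sub_le {α : ℝ} (hα0 : 0 ≤ α) (hα1 : α ≤ 1) (M : ℕ) :
    |triangleSum α (fun x _ => x) M - α / 3 * M ^ 3| ≤ 2 * (M : ℝ) ^ 2 := by
  rw [triangleSum_eq_sum_Icc_floor hα1]
  refine abs_sum_Icc_sub_cube_le hα0 hα1 (fun m => ?_) M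
  have hfloor_le := Nat.floor_le (by positivity : 0 ≤ α * m)
  have hfloor_gt := Nat.sub_one_lt_floor (α * m)
  rw [sum_const, Nat.card_Icc, nsmul_eq_mul, Nat.add_sub_cancel, abs_le]
  constructor <;> nlinarith [(Nat.cast_nonneg m : (0 : ℝ) ≤ m)]

theorem abs_triangleSum_snd_sub_le {α : ℝ} (hα0 : 0 ≤ α) (hα1 : α ≤ 1) (M : ℕ) :
    |triangleSum α (fun _ y => y) M - α ^ 2 / 6 * M ^ 3| ≤ 2 * (M : ℝ) ^ 2 := by
  rw [triangleSum_eq_sum_Icc_floor hα1, show α ^ 2 / 6 = α ^ 2 / 2 / 3 by ring]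
  refine abs_sum_Icc_sub_cube_le (by positivity) (by nlinarith) (fun m => ?_) M
  have hfloor_le := Nat.floor_le (by positivity : 0 ≤ α * m)
  have hfloor_gt := Nat.sub_one_lt_floor (α * m)
  have hsum := sum_Icc_id_mul_two ⌊α * m⌋₊
  rw [abs_le]
  constructor <;> nlinarith [(Nat.cast_nonneg m : (0 : ℝ) ≤ m)]

theorem hasSum_moebius_div_sq :
    HasSum (fun n : ℕ => (μ n : ℝ) / n ^ 2) (6 / Real.pi ^ 2) := by
  have hs : 1 < (2 : ℂ).re := by norm_num
  have hL : LSeries (fun n => (μ n : ℂ)) 2 = ((6 / Real.pi ^ 2 : ℝ) : ℂ) := by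
    have h := LSeries_zeta_mul_Lseries_moebius hs
    rw [LSeries_zeta_eq_riemannZeta hs, riemannZeta_two] at h
    push_cast
    field_simp
    linear_combination 6 * h
  have hterm : ∀ n, LSeries.term (fun n => (μ n : ℂ)) 2 n = (((μ n : ℝ) / n ^ 2 : ℝ) : ℂ) := by
    intro n
    rcases eq_or_ne n 0 with rfl | hn
    · simp
    · rw [LSeries.term_of_ne_zero hn]
      push_cast
      rw [Complex.cpow_ofNat]
  have h := (LSeriesSummable_moebius_iff.mpr hs).LSeriesHasSum
  rw [hL, LSeriesHasSum, funext hterm] at h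
  exact Complex.hasSum_ofReal.1 h

theorem abs_sum_Icc_moebius_div_sq_sub_le {N : ℕ} (hN : N ≠ 0) :
    |∑ d ∈ Icc 1 N, (μ d : ℝ) / d ^ 2 - 6 / Real.pi ^ 2| ≤ 1 / (N : ℝ) := by
  set S : ℕ → ℝ := fun M => ∑ d ∈ Icc 1 M, (μ d : ℝ) / d ^ 2
  have hS : Tendsto S atTop (𝓝 (6 / Real.pi ^ 2)) := by
    have h := (tendsto_add_atTop_iff_nat 1).2 hasSum_moebius_div_sq.tendsto_sum_nat
    refine h.congr fun M => ?_
    rw [sum_range_succ', range_eq_Ico, sum_Ico_add' (fun d : ℕ => (μ d : ℝ) / d ^ 2)]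
    simp [S, Ico_add_one_right_eq_Icc]
  have htail : ∀ M, N ≤ M → |S M - S N| ≤ 1 / (N : ℝ) := by
    intro M hNM
    have hsplit : S M - S N = ∑ d ∈ Ioc N M, (μ d : ℝ) / d ^ 2 := by
      have hIcc : ∀ K : ℕ, Icc 1 K = Ioc 0 K := fun K => Icc_add_one_left_eq_Ioc 0 K
      simp only [S, hIcc]
      rw [← sum_Ioc_consecutive _ (Nat.zero_le N) hNM, add_sub_cancel_left]
    have hterm : ∀ d : ℕ, |(μ d : ℝ) / d ^ 2| ≤ ((d : ℝ) ^ 2)⁻¹ := fun d => by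
      rw [abs_div, abs_of_nonneg (by positivity : (0 : ℝ) ≤ d ^ 2), div_eq_mul_inv]
      exact mul_le_of_le_one_left (by positivity) (by exact_mod_cast abs_moebius_le_one)
    calc |S M - S N| ≤ ∑ d ∈ Ioc N M, ((d : ℝ) ^ 2)⁻¹ :=
          hsplit ▸ (abs_sum_le_sum_abs _ _).trans (sum_le_sum fun d _ => hterm d)
      _ ≤ (N : ℝ)⁻¹ - (M : ℝ)⁻¹ := sum_Ioc_inv_sq_le_sub hN hNM
      _ ≤ 1 / (N : ℝ) := by rw [one_div]; linarith [(by positivity : (0 : ℝ) ≤ (M : ℝ)⁻¹)]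
  have h : Tendsto (fun M => |S N - S M|) atTop (𝓝 |S N - 6 / Real.pi ^ 2|) :=
    (tendsto_const_nhds.sub hS).abs
  exact le_of_tendsto h (eventually_atTop.2 ⟨N, fun M hM => abs_sub_comm (S M) _ ▸ htail M hM⟩)

theorem sum_Icc_inv_le_one_add_log (N : ℕ) : ∑ d ∈ Icc 1 N, (d : ℝ)⁻¹ ≤ 1 + Real.log N := by
  simpa [harmonic_eq_sum_Icc] using harmonic_le_one_add_log N

theorem cube_sub_cube_le {a b : ℝ} (ha : 0 ≤ a) (hab : a ≤ b) :
    b ^ 3 - a ^ 3 ≤ 3 * b ^ 2 * (b - a) := by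
  nlinarith [mul_nonneg (sub_nonneg.2 hab) (mul_nonneg ha (sub_nonneg.2 hab)),
    mul_nonneg (sub_nonneg.2 hab) (sq_nonneg (b - a))]

theorem abs_mul_natDiv_cube_sub_le {d : ℕ} (hd : 0 < d) (N : ℕ) :
    |d * ((N / d : ℕ) : ℝ) ^ 3 - N ^ 3 / d ^ 2| ≤ 3 * N ^ 2 / d := by
  have hd' : (0 : ℝ) < d := by exact_mod_cast hd
  have hqd : ((N / d : ℕ) : ℝ) * d ≤ N := by exact_mod_cast Nat.div_mul_le_self N d
  have hNqd : (N : ℝ) < ((N / d : ℕ) : ℝ) * d + d := by exact_mod_cast Nat.lt_div_mul_add hd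
  set q : ℝ := ((N / d : ℕ) : ℝ)
  have hcube := cube_sub_cube_le (by positivity) hqd
  have hcube0 : (q * d) ^ 3 ≤ N ^ 3 := pow_le_pow_left₀ (by positivity) hqd 3
  rw [show d * q ^ 3 - N ^ 3 / d ^ 2 = -((N ^ 3 - (q * d) ^ 3) / d ^ 2) by field_simp; ring,
    abs_neg, abs_of_nonneg (div_nonneg (sub_nonneg.2 hcube0) (by positivity)),
    div_le_div_iff₀ (by positivity) hd']
  have hgap : (N : ℝ) - q * d ≤ d := by linarith
  nlinarith [mul_le_mul_of_nonneg_left hgap (by positivity : (0 : ℝ) ≤ 3 * N ^ 2)]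

section MoebiusWeightedSum

variable {β : ℝ} {F : ℕ → ℝ}

theorem abs_mul_apply_div_sub_le (hβ0 : 0 ≤ β) (hβ1 : β ≤ 1)
    (hF : ∀ M, |F M - β * M ^ 3| ≤ 2 * (M : ℝ) ^ 2) {d : ℕ} (hd : 0 < d) (N : ℕ) :
    |d * F (N / d) - β * N ^ 3 / d ^ 2| ≤ 5 * N ^ 2 / d := by
  have hd' : (0 : ℝ) < d := by exact_mod_cast hd
  have hqd : ((N / d : ℕ) : ℝ) * d ≤ N := by exact_mod_cast Nat.div_mul_le_self N d
  have hfirst : |d * (F (N / d) - β * ((N / d : ℕ) : ℝ) ^ 3)| ≤ 2 * N ^ 2 / d := by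
    rw [abs_mul, abs_of_pos hd', le_div_iff₀ hd']
    calc d * |F (N / d) - β * ((N / d : ℕ) : ℝ) ^ 3| * d
        = d ^ 2 * |F (N / d) - β * ((N / d : ℕ) : ℝ) ^ 3| := by ring
      _ ≤ d ^ 2 * (2 * ((N / d : ℕ) : ℝ) ^ 2) := by gcongr; exact hF (N / d)
      _ = 2 * (((N / d : ℕ) : ℝ) * d) ^ 2 := by ring
      _ ≤ 2 * N ^ 2 := by gcongr
  have hsecond : |β * (d * ((N / d : ℕ) : ℝ) ^ 3 - N ^ 3 / d ^ 2)| ≤ 3 * N ^ 2 / d := by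
    rw [abs_mul, abs_of_nonneg hβ0]
    exact mul_le_of_le_one_left (abs_nonneg _) hβ1 |>.trans (abs_mul_natDiv_cube_sub_le hd N)
  calc |d * F (N / d) - β * N ^ 3 / d ^ 2|
      = |d * (F (N / d) - β * ((N / d : ℕ) : ℝ) ^ 3) +
          β * (d * ((N / d : ℕ) : ℝ) ^ 3 - N ^ 3 / d ^ 2)| := by ring_nf
    _ ≤ 2 * N ^ 2 / d + 3 * N ^ 2 / d := (abs_add_le _ _).trans (add_le_add hfirst hsecond)
    _ = 5 * N ^ 2 / d := by ring

theorem abs_sum_moebius_mul_apply_div_sub_le (hβ0 : 0 ≤ β) (hβ1 : β ≤ 1)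
    (hF : ∀ M, |F M - β * M ^ 3| ≤ 2 * (M : ℝ) ^ 2) {N : ℕ} (hN : N ≠ 0) :
    |∑ d ∈ Icc 1 N, (μ d : ℝ) * (d * F (N / d)) - 6 / Real.pi ^ 2 * β * N ^ 3| ≤
      5 * N ^ 2 * (1 + Real.log N) + N ^ 2 := by
  have hsplit : ∑ d ∈ Icc 1 N, (μ d : ℝ) * (d * F (N / d)) - 6 / Real.pi ^ 2 * β * N ^ 3 =
      ∑ d ∈ Icc 1 N, (μ d : ℝ) * (d * F (N / d) - β * N ^ 3 / d ^ 2) +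
        β * N ^ 3 * (∑ d ∈ Icc 1 N, (μ d : ℝ) / d ^ 2 - 6 / Real.pi ^ 2) := by
    simp only [mul_sub, sum_sub_distrib, mul_sum]
    ring_nf
  have hmain : |∑ d ∈ Icc 1 N, (μ d : ℝ) * (d * F (N / d) - β * N ^ 3 / d ^ 2)| ≤
      5 * N ^ 2 * (1 + Real.log N) := by
    refine (abs_sum_le_sum_abs _ _).trans ?_
    calc ∑ d ∈ Icc 1 N, |(μ d : ℝ) * (d * F (N / d) - β * N ^ 3 / d ^ 2)|
        ≤ ∑ d ∈ Icc 1 N, 5 * (N : ℝ) ^ 2 * (d : ℝ)⁻¹ := by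
          refine sum_le_sum fun d hd => ?_
          rw [abs_mul, ← div_eq_mul_inv]
          exact mul_le_of_le_one_left (abs_nonneg _) (by exact_mod_cast abs_moebius_le_one)
            |>.trans (abs_mul_apply_div_sub_le hβ0 hβ1 hF (mem_Icc.1 hd).1 N)
      _ ≤ 5 * N ^ 2 * (1 + Real.log N) := by
          rw [← mul_sum]
          exact mul_le_mul_of_nonneg_left (sum_Icc_inv_le_one_add_log N) (by positivity)
  have htail :
      |β * N ^ 3 * (∑ d ∈ Icc 1 N, (μ d : ℝ) / d ^ 2 - 6 / Real.pi ^ 2)| ≤ (N : ℝ) ^ 2 := by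
    have hN' : (0 : ℝ) < N := by exact_mod_cast Nat.pos_of_ne_zero hN
    rw [abs_mul, abs_of_nonneg (by positivity)]
    calc β * (N : ℝ) ^ 3 * |∑ d ∈ Icc 1 N, (μ d : ℝ) / d ^ 2 - 6 / Real.pi ^ 2|
        ≤ 1 * (N : ℝ) ^ 3 * (1 / (N : ℝ)) := by
          gcongr
          exact abs_sum_Icc_moebius_div_sq_sub_le hN
      _ = (N : ℝ) ^ 2 := by field_simp
  rw [hsplit]
  exact (abs_add_le _ _).trans (add_le_add hmain htail)

theorem abs_sum_moebius_mul_apply_div_sub_le_log (hβ0 : 0 ≤ β) (hβ1 : β ≤ 1)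
    (hF : ∀ M, |F M - β * M ^ 3| ≤ 2 * (M : ℝ) ^ 2) {u : ℝ} (hu : 2 ≤ u) :
    |∑ d ∈ Icc 1 ⌊u⌋₊, (μ d : ℝ) * (d * F (⌊u⌋₊ / d)) - 6 / Real.pi ^ 2 * β * u ^ 3| ≤
      23 * u ^ 2 * Real.log u := by
  set N := ⌊u⌋₊
  have hN : N ≠ 0 := (Nat.floor_pos.2 (by linarith)).ne'
  have hN0 : (0 : ℝ) < N := by exact_mod_cast Nat.pos_of_ne_zero hN
  have hNu : (N : ℝ) ≤ u := Nat.floor_le (by linarith)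
  have huN : u - N ≤ 1 := by linarith [Nat.lt_floor_add_one u]
  have hlog : Real.log N ≤ Real.log u := Real.log_le_log hN0 hNu
  have hlog2 : 1 ≤ 2 * Real.log u := by
    linarith [Real.log_le_log (by norm_num) hu, Real.log_two_gt_d9]
  have hpi : 6 / Real.pi ^ 2 ≤ 1 := by
    rw [div_le_one (by positivity)]
    nlinarith [Real.pi_gt_three]
  have hcube : |6 / Real.pi ^ 2 * β * (u ^ 3 - N ^ 3)| ≤ 3 * u ^ 2 := by
    have hcube0 : 0 ≤ u ^ 3 - N ^ 3 := sub_nonneg.2 (pow_le_pow_left₀ hN0.le hNu 3)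
    rw [abs_of_nonneg (by positivity)]
    calc 6 / Real.pi ^ 2 * β * (u ^ 3 - N ^ 3) ≤ 1 * (u ^ 3 - N ^ 3) :=
          mul_le_mul_of_nonneg_right (mul_le_one₀ hpi hβ0 hβ1) hcube0
      _ ≤ 3 * u ^ 2 := by nlinarith [cube_sub_cube_le hN0.le hNu, sq_nonneg u]
  have hN2 : (N : ℝ) ^ 2 ≤ u ^ 2 := pow_le_pow_left₀ hN0.le hNu 2
  have hlogN : 0 ≤ Real.log N := Real.log_nonneg (by exact_mod_cast Nat.one_le_iff_ne_zero.2 hN)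
  have hfirst : 5 * (N : ℝ) ^ 2 * (1 + Real.log N) ≤ 5 * u ^ 2 * (3 * Real.log u) := by
    gcongr 5 * ?_ * ?_
    linarith
  calc |∑ d ∈ Icc 1 N, (μ d : ℝ) * (d * F (N / d)) - 6 / Real.pi ^ 2 * β * u ^ 3|
      = |(∑ d ∈ Icc 1 N, (μ d : ℝ) * (d * F (N / d)) - 6 / Real.pi ^ 2 * β * N ^ 3) -
          6 / Real.pi ^ 2 * β * (u ^ 3 - N ^ 3)| := by ring_nf
    _ ≤ (5 * N ^ 2 * (1 + Real.log N) + N ^ 2) + 3 * u ^ 2 :=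
        (abs_sub _ _).trans (add_le_add (abs_sum_moebius_mul_apply_div_sub_le hβ0 hβ1 hF hN) hcube)
    _ ≤ 23 * u ^ 2 * Real.log u := by nlinarith

end MoebiusWeightedSum

/-- Asymptotics for the sums over primitive vectors in the triangle
1 ≤ x ≤ u, 1 ≤ y ≤ α·x. -/
theorem R_asymptotics :
    ∃ C : ℝ, 0 < C ∧ ∀ u α : ℝ, 2 ≤ u → 0 ≤ α → α ≤ 1 →
      |Rx u α - 2 / Real.pi ^ 2 * u ^ 3 * α| ≤ C * u ^ 2 * Real.log u ∧
      |Ry u α - 1 / Real.pi ^ 2 * u ^ 3 * α ^ 2| ≤ C * u ^ 2 * Real.log u := by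
  refine ⟨23, by norm_num, fun u α hu hα0 hα1 => ⟨?_, ?_⟩⟩
  · rw [Rx, sum_primitive_eq_sum_moebius_mul_triangleSum α _ fun d x _ => Nat.cast_mul d x,
      show 2 / Real.pi ^ 2 * u ^ 3 * α = 6 / Real.pi ^ 2 * (α / 3) * u ^ 3 by ring]
    exact abs_sum_moebius_mul_apply_div_sub_le_log (by positivity) (by linarith)
      (abs_triangleSum_fst_sub_le hα0 hα1) hu
  · rw [Ry, sum_primitive_eq_sum_moebius_mul_triangleSum α _ fun d _ y => Nat.cast_mul d y,
      show 1 / Real.pi ^ 2 * u ^ 3 * α ^ 2 = 6 / Real.pi ^ 2 * (α ^ 2 / 6) * u ^ 3 by ring]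
    exact abs_sum_moebius_mul_apply_div_sub_le_log (by positivity) (by nlinarith)
      (abs_triangleSum_snd_sub_le hα0 hα1) hu
end

section
/- For every positive integer t, H_t = Σ_{1 ≤ j ≤ i ≤ t} i / gcd(i, j), where the sum is over all pairs of integers (i, j) with 1 ≤ j ≤ i ≤ t. -/
/-- H_t = Σ_{1 ≤ j ≤ i ≤ t} i / gcd(i,j). -/
theorem Hper_eq_gcd_sum (t : ℕ) (ht : 0 < t) :
    Hper t = ∑ p ∈ (Finset.Icc 1 t ×ˢ Finset.Icc 1 t).filter
        (fun p => p.2 ≤ p.1), p.1 / Nat.gcd p.1 p.2 := by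
  classical
  rw [Hper]
  rw [Finset.sum_congr rfl (fun p _ => by
    rw [show (t / p.1) * p.1 = ∑ _d ∈ Finset.Icc 1 (t / p.1), p.1 by
      simp [Finset.sum_const, Nat.card_Icc]])]
  rw [Finset.sum_sigma']
  refine Finset.sum_nbij' (fun s => (s.2 * s.1.1, s.2 * s.1.2))
    (fun p => ⟨(p.1 / Nat.gcd p.1 p.2, p.2 / Nat.gcd p.1 p.2), Nat.gcd p.1 p.2⟩)
    ?_ ?_ ?_ ?_ ?_
  · rintro ⟨⟨x, y⟩, d⟩ hs
    simp only [Finset.mem_sigma, Finset.mem_filter, Finset.mem_product, Finset.mem_Icc] at hs ⊢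
    obtain ⟨⟨⟨⟨hx1, hxt⟩, ⟨hy1, _⟩⟩, hyx, hg⟩, hd1, hd2⟩ := hs
    have hx0 : 0 < x := hx1
    have hdx : d * x ≤ t := (Nat.le_div_iff_mul_le hx0).mp hd2
    exact ⟨⟨⟨Nat.one_le_iff_ne_zero.mpr (by positivity), hdx⟩,
      ⟨Nat.one_le_iff_ne_zero.mpr (by positivity),
        le_trans (Nat.mul_le_mul_left d hyx) hdx⟩⟩,
      Nat.mul_le_mul_left d hyx⟩
  · rintro ⟨i, j⟩ hp
    simp only [Finset.mem_sigma, Finset.mem_filter, Finset.mem_product, Finset.mem_Icc] at hp ⊢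
    obtain ⟨⟨⟨hi1, hit⟩, ⟨hj1, _⟩⟩, hji⟩ := hp
    set g := Nat.gcd i j with hg
    have hg0 : 0 < g := Nat.gcd_pos_of_pos_left j hi1
    have hgi : g ∣ i := Nat.gcd_dvd_left i j
    have hgj : g ∣ j := Nat.gcd_dvd_right i j
    have hgle : g ≤ i := Nat.le_of_dvd hi1 hgi
    have hx1 : 1 ≤ i / g := (Nat.one_le_div_iff hg0).mpr hgle
    refine ⟨⟨⟨⟨hx1, le_trans (Nat.div_le_self i g) hit⟩,
      ⟨(Nat.one_le_div_iff hg0).mpr (Nat.le_of_dvd hj1 hgj),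
        le_trans (Nat.div_le_self j g) (le_trans hji hit)⟩⟩,
      Nat.div_le_div_right hji, Nat.coprime_div_gcd_div_gcd hg0⟩,
      hg0, ?_⟩
    rw [Nat.le_div_iff_mul_le hx1]
    calc g * (i / g) = i := Nat.mul_div_cancel' hgi
      _ ≤ t := hit
  · rintro ⟨⟨x, y⟩, d⟩ hs
    simp only [Finset.mem_sigma, Finset.mem_filter, Finset.mem_product, Finset.mem_Icc] at hs
    obtain ⟨⟨_, _, hg⟩, hd1, _⟩ := hs
    have : Nat.gcd (d * x) (d * y) = d := by
      rw [Nat.gcd_mul_left, hg, mul_one]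
    simp [this, Nat.mul_div_cancel_left _ (Nat.lt_of_lt_of_le Nat.zero_lt_one hd1)]
  · rintro ⟨i, j⟩ hp
    simp only [Finset.mem_sigma, Finset.mem_filter, Finset.mem_product, Finset.mem_Icc] at hp
    obtain ⟨⟨⟨hi1, _⟩, _⟩, _⟩ := hp
    simp [Nat.mul_div_cancel' (Nat.gcd_dvd_left i j), Nat.mul_div_cancel' (Nat.gcd_dvd_right i j)]
  · rintro ⟨⟨x, y⟩, d⟩ hs
    simp only [Finset.mem_sigma, Finset.mem_filter, Finset.mem_product, Finset.mem_Icc] at hs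
    obtain ⟨⟨_, _, hg⟩, hd1, _⟩ := hs
    have hgd : Nat.gcd (d * x) (d * y) = d := by rw [Nat.gcd_mul_left, hg, mul_one]
    simp [hgd, Nat.mul_div_cancel_left _ (Nat.lt_of_lt_of_le Nat.zero_lt_one hd1)]
end

section
/- For every positive integer i, Σ_{j=1}^{i} i / gcd(i, j) = Σ_{d ∣ i} d·φ(d), where the right-hand sum is over all positive divisors d of i and φ denotes Euler's totient function. -/
/-- For every positive integer i, Σ_{j=1}^i i / gcd(i,j) = Σ_{d ∣ i} d·φ(d). -/
theorem sum_div_gcd_eq_sum_divisors (i : ℕ) (hi : 0 < i) :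
    ∑ j ∈ Finset.Icc 1 i, i / Nat.gcd i j
      = ∑ d ∈ Nat.divisors i, d * Nat.totient d := by
  have h1 : ∑ j ∈ Finset.Icc 1 i, i / Nat.gcd i j
      = ∑ j ∈ Finset.range i, i / Nat.gcd i j := by
    have hIcc : Finset.Icc 1 i = insert i (Finset.Ico 1 i) := by
      rw [Finset.Ico_insert_right hi]
    have hrange : Finset.range i = insert 0 (Finset.Ico 1 i) := by
      ext j; simp [Finset.mem_range, Finset.mem_Ico]; omega
    rw [hIcc, hrange, Finset.sum_insert (by simp), Finset.sum_insert (by simp)]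
    simp [Nat.gcd_self, Nat.gcd_zero_right]
  rw [h1]
  have h2 : ∀ j ∈ Finset.range i, Nat.gcd i j ∈ Nat.divisors i := fun j _ =>
    Nat.mem_divisors.2 ⟨Nat.gcd_dvd_left _ _, hi.ne'⟩
  rw [← Finset.sum_fiberwise_of_maps_to h2 (fun j => i / Nat.gcd i j)]
  have h3 : ∀ d ∈ Nat.divisors i,
      ∑ j ∈ Finset.range i with Nat.gcd i j = d, i / Nat.gcd i j
        = (i / d) * Nat.totient (i / d) := by
    intro d hd
    rw [Finset.sum_congr rfl (fun j hj => by
      rw [(Finset.mem_filter.1 hj).2]), Finset.sum_const, smul_eq_mul,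
      ← Nat.totient_div_of_dvd (Nat.dvd_of_mem_divisors hd), mul_comm]
  rw [Finset.sum_congr rfl h3]
  rw [Nat.sum_div_divisors i (fun d => d * Nat.totient d)]
end

section
/- Let a_N, a_D, b_N, b_D be integers with a_D ≥ 1, b_D ≥ 1, gcd(a_N, a_D) = 1 and gcd(b_N, b_D) = 1, and let H be the smallest positive integer such that both z = 2·(a_N/a_D)·H and w = (a_N/a_D)·H² + (b_N/b_D)·H are integers. Then: (i) if a_D ≡ 0 (mod 4), then H = lcm(a_D/2, b_D); (ii) if a_D ≡ 2 (mod 4) and b_D ≡ 2 (mod 4), then H = lcm(a_D/2, b_D/2); (iii) in all other cases, H = lcm(a_D, b_D). In particular, H is either lcm(a_D, b_D) or lcm(a_D, b_D)/2. -/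
/-!
Write `a = aN/aD`, `b = bN/bD` and `w(H) = a H² + b H`. Integrality of `2aH` means `aD ∣ 2H`
(as `aN` is prime to `aD`). Whenever `aH²` is then also integral, `w(H)` is integral exactly when
`bD ∣ H`; this happens if `aD` is odd (then `aD ∣ H`) or `4 ∣ aD` (then `aD ∣ (2H)²/4`).
The only other case is `aD = 2M` with `M` odd, where `aH² = aN M t²/2` for `H = M t` is a
half-integer when `t` is odd. A parity count shows that `bH` can cancel that half exactly when
`bD ≡ 2 (mod 4)`, and then the condition becomes `bD/2 ∣ H`. In every case the admissible `H` are
the common multiples of two numbers, so the least one is their lcm.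
-/

/-- `GoodPeriod aN aD bN bD H` says that both `z = 2·(aN/aD)·H` and
`w = (aN/aD)·H² + (bN/bD)·H` are integers. -/
def GoodPeriod (aN bN : ℤ) (aD bD : ℕ) (H : ℕ) : Prop :=
  (∃ z : ℤ, (z : ℚ) = 2 * ((aN : ℚ) / (aD : ℚ)) * (H : ℚ)) ∧
  (∃ w : ℤ, (w : ℚ) = ((aN : ℚ) / (aD : ℚ)) * (H : ℚ) ^ 2 + ((bN : ℚ) / (bD : ℚ)) * (H : ℚ))

lemma exists_intCast_eq_div_iff {n d : ℤ} (hd : d ≠ 0) :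
    (∃ z : ℤ, (z : ℚ) = n / d) ↔ d ∣ n := by
  constructor
  · rintro ⟨z, hz⟩
    rw [eq_div_iff (by exact_mod_cast hd)] at hz
    exact ⟨z, by exact_mod_cast hz.symm.trans (mul_comm _ _)⟩
  · rintro ⟨k, rfl⟩
    exact ⟨k, by push_cast; field_simp⟩

lemma IsCoprime.odd_of_two_dvd {A n : ℤ} (h : IsCoprime A n) (h2 : 2 ∣ A) : Odd n :=
  Int.isCoprime_two_left.mp (h.of_isCoprime_of_dvd_left h2)

lemma Odd.dvd_of_dvd_two_mul {A H : ℤ} (hA : Odd A) (h : A ∣ 2 * H) : A ∣ H :=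
  (Int.isCoprime_two_right.mpr hA).dvd_of_dvd_mul_left h

lemma dvd_sq_of_four_dvd_of_dvd_two_mul {A H : ℤ} (h4 : 4 ∣ A) (h : A ∣ 2 * H) : A ∣ H ^ 2 := by
  have : 4 * A ∣ 4 * H ^ 2 :=
    calc 4 * A ∣ A * A := mul_dvd_mul_right h4 A
      _ ∣ (2 * H) * (2 * H) := mul_dvd_mul h h
      _ = 4 * H ^ 2 := by ring
  exact (mul_dvd_mul_iff_left four_ne_zero).mp this

lemma Nat.lcm_two_mul_eq_or (m n : ℕ) :
    Nat.lcm (2 * m) n = Nat.lcm m n ∨ Nat.lcm (2 * m) n = 2 * Nat.lcm m n := by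
  have hle : Nat.lcm m n ∣ Nat.lcm (2 * m) n :=
    Nat.lcm_dvd ((dvd_mul_left m 2).trans (Nat.dvd_lcm_left _ _)) (Nat.dvd_lcm_right _ _)
  have hge : Nat.lcm (2 * m) n ∣ 2 * Nat.lcm m n :=
    Nat.lcm_dvd (mul_dvd_mul_left 2 (Nat.dvd_lcm_left m n))
      ((Nat.dvd_lcm_right m n).trans (dvd_mul_left _ 2))
  obtain ⟨k, hk⟩ := hle
  rcases Nat.eq_zero_or_pos (Nat.lcm m n) with h0 | hpos
  · left; rw [hk, h0, zero_mul]
  have hk2 : k ∣ 2 := by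
    rw [hk, mul_comm 2] at hge
    exact (Nat.mul_dvd_mul_iff_left hpos).mp hge
  rcases (Nat.dvd_prime Nat.prime_two).mp hk2 with rfl | rfl
  · left; rw [hk, mul_one]
  · right; rw [hk, mul_comm]

lemma eq_lcm_of_forall_iff_dvd {P : ℕ → Prop} {m n H : ℕ} (hm : 0 < m) (hn : 0 < n)
    (hP : ∀ k, P k ↔ m ∣ k ∧ n ∣ k) (hH : 0 < H) (hPH : P H)
    (hmin : ∀ k, 0 < k → P k → H ≤ k) : H = Nat.lcm m n :=
  le_antisymm
    (hmin _ (Nat.lcm_pos hm hn) ((hP _).mpr ⟨Nat.dvd_lcm_left m n, Nat.dvd_lcm_right m n⟩))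
    (Nat.le_of_dvd hH (Nat.lcm_dvd ((hP H).mp hPH).1 ((hP H).mp hPH).2))

section Divisibility

variable {aN bN A B H : ℤ}

/-- `A * B ∣ aN * B * H ^ 2 + bN * A * H` is the integrality of `(aN/A) H² + (bN/B) H`. -/
lemma mul_dvd_quadratic_iff (hA : A ≠ 0) (hB : IsCoprime B bN) (hAH : A ∣ H ^ 2) :
    A * B ∣ aN * B * H ^ 2 + bN * A * H ↔ B ∣ H := by
  have hsq : A * B ∣ aN * B * H ^ 2 := by
    obtain ⟨t, ht⟩ := hAH
    exact ⟨aN * t, by rw [ht]; ring⟩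
  rw [dvd_add_right hsq, show bN * A * H = A * (bN * H) by ring, mul_dvd_mul_iff_left hA]
  exact ⟨hB.dvd_of_dvd_mul_left, fun h => h.mul_left bN⟩

lemma two_mul_dvd_quadratic_iff {M N : ℤ} (hM : Odd M) (hN : Odd N) (haN : Odd aN)
    (hbN : Odd bN) (hNb : IsCoprime N bN) (hMH : M ∣ H) :
    (2 * M) * (2 * N) ∣ aN * (2 * N) * H ^ 2 + bN * (2 * M) * H ↔ N ∣ H := by
  have hX : Even (aN * N * H ^ 2 + bN * M * H) := by
    by_cases h : Even H <;> simp_all [parity_simps, ← Int.not_even_iff_odd]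
  have hMN : IsCoprime 2 (M * N) := Int.isCoprime_two_left.mpr (hM.mul hN)
  rw [show (2 * M) * (2 * N) = 2 * (2 * (M * N)) by ring,
    show aN * (2 * N) * H ^ 2 + bN * (2 * M) * H = 2 * (aN * N * H ^ 2 + bN * M * H) by ring,
    mul_dvd_mul_iff_left two_ne_zero,
    ← mul_dvd_quadratic_iff (by rintro rfl; simp at hM) hNb (dvd_pow hMH two_ne_zero)]
  exact ⟨(dvd_mul_left _ _).trans, hMN.mul_dvd (even_iff_two_dvd.mp hX)⟩

/-- Unless `B ≡ 2 (mod 4)`, the half-integer `aN M H² / 2` cannot be cancelled by `bN H / B`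
for odd `H`. -/
lemma even_of_two_mul_dvd_quadratic {M : ℤ} (hM : Odd M) (haN : Odd aN) (hB : IsCoprime B bN)
    (hB2 : B % 4 ≠ 2) (h : (2 * M) * B ∣ aN * B * H ^ 2 + bN * (2 * M) * H) : Even H := by
  by_contra hH
  rw [Int.not_even_iff_odd] at hH
  rcases Int.even_or_odd B with hBe | hBo
  · have hbN := hB.odd_of_two_dvd (even_iff_two_dvd.mp hBe)
    obtain ⟨c, rfl⟩ : 4 ∣ B := by rw [Int.even_iff] at hBe; omega
    have h4 : 4 ∣ aN * (4 * c) * H ^ 2 + 2 * (bN * M * H) := by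
      rw [show bN * (2 * M) * H = 2 * (bN * M * H) by ring] at h
      exact dvd_trans ⟨2 * M * c, by ring⟩ h
    rw [dvd_add_right ⟨aN * c * H ^ 2, by ring⟩, show (4 : ℤ) = 2 * 2 by norm_num,
      mul_dvd_mul_iff_left two_ne_zero] at h4
    exact Int.not_even_iff_odd.mpr ((hbN.mul hM).mul hH) (even_iff_two_dvd.mpr h4)
  · have h2 : Even (aN * B * H ^ 2 + bN * (2 * M) * H) :=
      even_iff_two_dvd.mpr ((dvd_mul_of_dvd_left (dvd_mul_right 2 M) B).trans h)
    simp_all [parity_simps, ← Int.not_even_iff_odd]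

end Divisibility

section GoodPeriod

variable {aN bN : ℤ} {aD bD : ℕ} (haD : 0 < aD) (hbD : 0 < bD)
  (ha : IsCoprime (aD : ℤ) aN) (hb : IsCoprime (bD : ℤ) bN)
include haD hbD ha

lemma goodPeriod_iff (H : ℕ) :
    GoodPeriod aN bN aD bD H ↔
      (aD : ℤ) ∣ 2 * H ∧ (aD : ℤ) * bD ∣ aN * bD * (H : ℤ) ^ 2 + bN * aD * H := by
  have hz : 2 * ((aN : ℚ) / aD) * H = ((aN * (2 * H) : ℤ) : ℚ) / ((aD : ℤ) : ℚ) := by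
    push_cast; ring
  have hw : ((aN : ℚ) / aD) * (H : ℚ) ^ 2 + ((bN : ℚ) / bD) * H =
      ((aN * bD * (H : ℤ) ^ 2 + bN * aD * H : ℤ) : ℚ) / ((aD * bD : ℤ) : ℚ) := by
    push_cast; field_simp
  unfold GoodPeriod
  rw [hz, hw, exists_intCast_eq_div_iff (by omega), exists_intCast_eq_div_iff (by positivity)]
  exact and_congr_left' ⟨ha.dvd_of_dvd_mul_left, fun h => h.mul_left aN⟩

include hb

lemma goodPeriod_iff_of_dvd {H : ℕ} (hAH : aD ∣ H) : GoodPeriod aN bN aD bD H ↔ bD ∣ H := by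
  have hAH' : (aD : ℤ) ∣ H := Int.natCast_dvd_natCast.mpr hAH
  rw [goodPeriod_iff haD hbD ha, mul_dvd_quadratic_iff (by omega) hb (dvd_pow hAH' two_ne_zero),
    Int.natCast_dvd_natCast]
  exact and_iff_right (dvd_mul_of_dvd_right hAH' 2)

lemma goodPeriod_iff_of_four_dvd (h4 : aD % 4 = 0) (H : ℕ) :
    GoodPeriod aN bN aD bD H ↔ aD / 2 ∣ H ∧ bD ∣ H := by
  rw [goodPeriod_iff haD hbD ha, Nat.div_dvd_iff_dvd_mul (by omega) two_pos,
    ← Int.natCast_dvd_natCast (m := aD), ← Int.natCast_dvd_natCast (m := bD)]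
  push_cast
  exact and_congr_right fun h => mul_dvd_quadratic_iff (by omega) hb
    (dvd_sq_of_four_dvd_of_dvd_two_mul (by omega) h)

lemma goodPeriod_iff_of_two_mod_four (ha2 : aD % 4 = 2) (hb2 : bD % 4 = 2) (H : ℕ) :
    GoodPeriod aN bN aD bD H ↔ aD / 2 ∣ H ∧ bD / 2 ∣ H := by
  have haN : Odd aN := ha.odd_of_two_dvd (by omega)
  have hbN : Odd bN := hb.odd_of_two_dvd (by omega)
  obtain ⟨M, rfl⟩ : ∃ M, aD = 2 * M := ⟨aD / 2, by omega⟩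
  obtain ⟨N, rfl⟩ : ∃ N, bD = 2 * N := ⟨bD / 2, by omega⟩
  have hM : Odd (M : ℤ) := (Int.odd_coe_nat M).mpr (by rw [Nat.odd_iff]; omega)
  have hN : Odd (N : ℤ) := (Int.odd_coe_nat N).mpr (by rw [Nat.odd_iff]; omega)
  have hNb : IsCoprime (N : ℤ) bN :=
    hb.of_isCoprime_of_dvd_left (by push_cast; exact dvd_mul_left _ _)
  rw [goodPeriod_iff haD hbD ha, Nat.mul_div_cancel_left _ two_pos,
    Nat.mul_div_cancel_left _ two_pos,
    ← Int.natCast_dvd_natCast (m := M), ← Int.natCast_dvd_natCast (m := N)]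
  push_cast
  rw [mul_dvd_mul_iff_left two_ne_zero]
  exact and_congr_right fun hMH => two_mul_dvd_quadratic_iff hM hN haN hbN hNb hMH

lemma dvd_of_goodPeriod (h0 : ¬aD % 4 = 0) (h22 : ¬(aD % 4 = 2 ∧ bD % 4 = 2)) {H : ℕ}
    (hgood : GoodPeriod aN bN aD bD H) : aD ∣ H := by
  rw [goodPeriod_iff haD hbD ha] at hgood
  obtain ⟨h1, h2⟩ := hgood
  rw [← Int.natCast_dvd_natCast]
  rcases Nat.even_or_odd aD with hae | hao
  · have haN : Odd aN := ha.odd_of_two_dvd (by exact_mod_cast hae.two_dvd)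
    obtain ⟨M, rfl⟩ : ∃ M, aD = 2 * M := ⟨aD / 2, by rw [Nat.even_iff] at hae; omega⟩
    have hM : Odd (M : ℤ) := (Int.odd_coe_nat M).mpr (by rw [Nat.odd_iff]; omega)
    push_cast at h1 h2 ⊢
    have hMH : (M : ℤ) ∣ H := (mul_dvd_mul_iff_left two_ne_zero).mp h1
    have hH := even_of_two_mul_dvd_quadratic hM haN hb (by omega) h2
    exact (Int.isCoprime_two_left.mpr hM).mul_dvd (even_iff_two_dvd.mp hH) hMH
  · exact ((Int.odd_coe_nat aD).mpr hao).dvd_of_dvd_two_mul h1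

lemma goodPeriod_iff_otherwise (h0 : ¬aD % 4 = 0) (h22 : ¬(aD % 4 = 2 ∧ bD % 4 = 2)) (H : ℕ) :
    GoodPeriod aN bN aD bD H ↔ aD ∣ H ∧ bD ∣ H :=
  ⟨fun h => have hAH := dvd_of_goodPeriod haD hbD ha hb h0 h22 h
      ⟨hAH, (goodPeriod_iff_of_dvd haD hbD ha hb hAH).mp h⟩,
    fun ⟨hAH, hBH⟩ => (goodPeriod_iff_of_dvd haD hbD ha hb hAH).mpr hBH⟩

end GoodPeriod

/-- The horizontal period of the parabola y = (aN/aD)·x² + (bN/bD)·x + c: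
the smallest positive integer H making z and w integral. -/
theorem horizontal_period_parabola (aN bN : ℤ) (aD bD : ℕ)
    (haD : 1 ≤ aD) (hbD : 1 ≤ bD)
    (ha : Int.gcd aN (aD : ℤ) = 1) (hb : Int.gcd bN (bD : ℤ) = 1)
    (H : ℕ) (hH : 0 < H) (hgood : GoodPeriod aN bN aD bD H)
    (hmin : ∀ H' : ℕ, 0 < H' → GoodPeriod aN bN aD bD H' → H ≤ H') :
    (aD % 4 = 0 → H = Nat.lcm (aD / 2) bD) ∧
    (aD % 4 = 2 ∧ bD % 4 = 2 → H = Nat.lcm (aD / 2) (bD / 2)) ∧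
    (¬(aD % 4 = 0) → ¬(aD % 4 = 2 ∧ bD % 4 = 2) → H = Nat.lcm aD bD) ∧
    (H = Nat.lcm aD bD ∨ H = Nat.lcm aD bD / 2) := by
  have ha' : IsCoprime (aD : ℤ) aN := (Int.isCoprime_iff_gcd_eq_one.mpr ha).symm
  have hb' : IsCoprime (bD : ℤ) bN := (Int.isCoprime_iff_gcd_eq_one.mpr hb).symm
  have hlcm {m n : ℕ} (hm : 0 < m) (hn : 0 < n)
      (hP : ∀ k, GoodPeriod aN bN aD bD k ↔ m ∣ k ∧ n ∣ k) : H = Nat.lcm m n :=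
    eq_lcm_of_forall_iff_dvd hm hn hP hH hgood hmin
  have h1 (h : aD % 4 = 0) : H = Nat.lcm (aD / 2) bD :=
    hlcm (by omega) hbD (goodPeriod_iff_of_four_dvd haD hbD ha' hb' h)
  have h2 (h : aD % 4 = 2 ∧ bD % 4 = 2) : H = Nat.lcm (aD / 2) (bD / 2) :=
    hlcm (by omega) (by omega) (goodPeriod_iff_of_two_mod_four haD hbD ha' hb' h.1 h.2)
  have h3 (h0 : ¬aD % 4 = 0) (h22 : ¬(aD % 4 = 2 ∧ bD % 4 = 2)) : H = Nat.lcm aD bD :=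
    hlcm haD hbD (goodPeriod_iff_otherwise haD hbD ha' hb' h0 h22)
  refine ⟨h1, h2, h3, ?_⟩
  by_cases h0 : aD % 4 = 0
  · obtain ⟨M, rfl⟩ : ∃ M, aD = 2 * M := ⟨aD / 2, by omega⟩
    rw [h1 h0, Nat.mul_div_cancel_left _ two_pos]
    rcases Nat.lcm_two_mul_eq_or M bD with h | h <;> omega
  by_cases h22 : aD % 4 = 2 ∧ bD % 4 = 2
  · have hdouble : Nat.lcm aD bD = 2 * Nat.lcm (aD / 2) (bD / 2) := by
      rw [← Nat.lcm_mul_left, Nat.mul_div_cancel' (by omega), Nat.mul_div_cancel' (by omega)]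
    omega
  · exact Or.inl (h3 h0 h22)
end
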